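/- arXiv:2302.09720 — 4 statements merged into one kernel-verified Lean document; each statement's English description precedes it below -/
import Mathlib

section
/- Let ρ₀ : ℝ × ℝ → ℝ be a measurable, bounded function with support contained in [0,5] × [−0.2, 0.2]. Then for every R ≥ 0 the function (r, θ, z) ↦ ρ₀(r, z) · (R − r·cos θ)/d³ · r, where d = √((r·cos θ − R)² + r²·sin²θ + z²), is Lebesgue integrable on the region (0, ∞) × (0, 2π) × ℝ. In particular the triple integral defining the non-relativistic velocity formula v_NS(R)²/R = ∫₀^∞ ∫₀^{2π} ∫_{−∞}^∞ ρ₀(r,z) (R − r·cos θ)/d³ · r dz dθ dr is well-defined (finite). -/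
open MeasureTheory Set
open Real

-- geometric positivity: no singularity on the open region
lemma aux_pos {R r θ : ℝ} (hR : 0 ≤ R) (hr : 0 < r) (h1 : 0 < θ) (h2 : θ < 2*π) :
    0 < (r * Real.cos θ - R)^2 + (r * Real.sin θ)^2 := by
  rcases lt_or_eq_of_le (by positivity : (0:ℝ) ≤ (r * Real.cos θ - R)^2 + (r * Real.sin θ)^2)
    with h | h
  · exact h
  exfalso
  have hs : Real.sin θ = 0 := by
    have h3 : (r * Real.sin θ)^2 = 0 := by nlinarith [sq_nonneg (r * Real.cos θ - R)]
    have := pow_eq_zero_iff (n := 2) (by norm_num) |>.1 h3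
    rcases mul_eq_zero.1 this with h' | h'
    · exact absurd h' hr.ne'
    · exact h'
  rcases Real.sin_eq_zero_iff.1 hs with ⟨n, hn⟩
  have hπ := Real.pi_pos
  have hn1 : n = 1 := by
    have hpos : (0:ℝ) < (n:ℝ) * π := hn ▸ h1
    have hlt : (n:ℝ) * π < 2 * π := hn ▸ h2
    have h01 : (0:ℝ) < (n:ℝ) := by
      by_contra hc
      push_neg at hc
      nlinarith
    have h2' : (n:ℝ) < 2 := by
      by_contra hc
      push_neg at hc
      nlinarith
    have : (0:ℤ) < n := by exact_mod_cast h01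
    have : n < 2 := by exact_mod_cast h2'
    omega
  subst hn1
  have hθπ : θ = π := by rw [← hn]; simp
  subst hθπ
  have h4 : (r * Real.cos π - R)^2 = 0 := by nlinarith [sq_nonneg (r * Real.sin π)]
  rw [Real.cos_pi] at h4
  have := pow_eq_zero_iff (n := 2) (by norm_num) |>.1 h4
  nlinarith

-- the polar Jacobian matrix, as in Mathlib's PolarCoord file
noncomputable def polB (p : ℝ × ℝ) : ℝ × ℝ →L[ℝ] ℝ × ℝ :=
  LinearMap.toContinuousLinearMap (Matrix.toLin (Module.Basis.finTwoProd ℝ) (Module.Basis.finTwoProd ℝ)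
    !![Real.cos p.2, -p.1 * Real.sin p.2; Real.sin p.2, p.1 * Real.cos p.2])

lemma polB_det (p : ℝ × ℝ) : (polB p).det = p.1 := by
  conv_rhs => rw [← one_mul p.1, ← Real.cos_sq_add_sin_sq p.2]
  simp only [polB, neg_mul, LinearMap.det_toContinuousLinearMap, LinearMap.det_toLin,
    Matrix.det_fin_two_of, sub_neg_eq_add]
  ring

lemma polB_deriv (p : ℝ × ℝ) : HasFDerivAt (⇑polarCoord.symm) (polB p) p :=
  hasFDerivAt_polarCoord_symm p

-- injectivity of polar map on θ ∈ (0, 2π)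
lemma injOn_polar : InjOn (⇑polarCoord.symm) (Ioc (0:ℝ) 5 ×ˢ Ioo (0:ℝ) (2*π)) := by
  rintro ⟨r₁, θ₁⟩ ⟨hr₁, hθ₁⟩ ⟨r₂, θ₂⟩ ⟨hr₂, hθ₂⟩ h
  simp only [polarCoord_symm_apply, Prod.mk.injEq] at h
  obtain ⟨h1, h2⟩ := h
  simp only [mem_Ioc, mem_Ioo] at hr₁ hθ₁ hr₂ hθ₂
  have t1 : r₁^2*(Real.sin θ₁^2 + Real.cos θ₁^2) = r₁^2 := by
    rw [Real.sin_sq_add_cos_sq, mul_one]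
  have t2 : r₂^2*(Real.sin θ₂^2 + Real.cos θ₂^2) = r₂^2 := by
    rw [Real.sin_sq_add_cos_sq, mul_one]
  have e1 : (r₁*Real.cos θ₁)^2 + (r₁*Real.sin θ₁)^2
      = (r₂*Real.cos θ₂)^2 + (r₂*Real.sin θ₂)^2 := by rw [h1, h2]
  have hsq : r₁^2 = r₂^2 := by nlinarith [t1, t2, e1]
  have hr : r₁ = r₂ := by nlinarith [hr₁.1, hr₂.1]
  subst hr
  have hc : Real.cos θ₁ = Real.cos θ₂ := mul_left_cancel₀ hr₁.1.ne' h1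
  have hs : Real.sin θ₁ = Real.sin θ₂ := mul_left_cancel₀ hr₁.1.ne' h2
  have hcos1 : Real.cos (θ₁ - θ₂) = 1 := by
    rw [Real.cos_sub, hc, hs, ← sq, ← sq, Real.cos_sq_add_sin_sq]
  have h12 : θ₁ - θ₂ = 0 := by
    refine (Real.cos_eq_one_iff_of_lt_of_lt ?_ ?_).1 hcos1 <;>
      [linarith [hθ₁.1, hθ₁.2, hθ₂.1, hθ₂.2]; linarith [hθ₁.1, hθ₁.2, hθ₂.1, hθ₂.2]]
  have : θ₁ = θ₂ := by linarith
  simp [this]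

lemma max_abs_cs (θ : ℝ) : (1:ℝ) ≤ |Real.cos θ| + |Real.sin θ| := by
  nlinarith [Real.sin_sq_add_cos_sq θ, sq_abs (Real.cos θ), sq_abs (Real.sin θ),
    Real.abs_cos_le_one θ, Real.abs_sin_le_one θ, abs_nonneg (Real.cos θ),
    abs_nonneg (Real.sin θ),
    mul_nonneg (sub_nonneg.2 (Real.abs_cos_le_one θ)) (abs_nonneg (Real.cos θ)),
    mul_nonneg (sub_nonneg.2 (Real.abs_sin_le_one θ)) (abs_nonneg (Real.sin θ))]

lemma norm_polar_lower {r θ : ℝ} (hr : 0 ≤ r) :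
    r / 2 ≤ ‖((r * Real.cos θ, r * Real.sin θ) : ℝ × ℝ)‖ := by
  rw [Prod.norm_def]
  simp only [Real.norm_eq_abs, abs_mul, abs_of_nonneg hr]
  have h := max_abs_cs θ
  have h2 : r * 1 ≤ r * (|Real.cos θ| + |Real.sin θ|) := by
    exact mul_le_mul_of_nonneg_left h hr
  have h3 : r * |Real.cos θ| ≤ max (r * |Real.cos θ|) (r * |Real.sin θ|) := le_max_left _ _
  have h4 : r * |Real.sin θ| ≤ max (r * |Real.cos θ|) (r * |Real.sin θ|) := le_max_right _ _
  nlinarith [h2]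

-- 2D local integrability of 1/‖x‖
lemma int_ball (B : ℝ) :
    Integrable (fun x : ℝ × ℝ =>
      (Metric.closedBall (0:ℝ×ℝ) B).indicator (fun y => 1/‖y‖) x) := by
  set g : ℝ × ℝ → ℝ := fun x => (Metric.closedBall (0:ℝ×ℝ) B).indicator (fun y => 1/‖y‖) x
    with hg
  have gmeas : Measurable g :=
    (measurable_const.div measurable_norm).indicator Metric.isClosed_closedBall.measurableSet
  have hs : MeasurableSet polarCoord.target := polarCoord.open_target.measurableSet
  have hderiv : ∀ p ∈ polarCoord.target,
      HasFDerivWithinAt (⇑polarCoord.symm) (polB p) polarCoord.target p :=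
    fun p _ => (polB_deriv p).hasFDerivWithinAt
  have hinj : InjOn (⇑polarCoord.symm) polarCoord.target := by
    have := polarCoord.symm.injOn
    rwa [OpenPartialHomeomorph.symm_source] at this
  have key := integrableOn_image_iff_integrableOn_abs_det_fderiv_smul volume hs hderiv hinj g
  rw [polarCoord.symm_image_target_eq_source] at key
  have hsrc : IntegrableOn g polarCoord.source ↔ Integrable g := by
    rw [IntegrableOn, Measure.restrict_congr_set polarCoord_source_ae_eq_univ,
      Measure.restrict_univ]
  rw [hsrc] at key
  rw [key]
  -- now prove integrability of the polar-transformed function on the target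
  have hφmeas : MeasurableSet (Ioc (0:ℝ) (2*B+2) ×ˢ Ioo (-π) π) :=
    measurableSet_Ioc.prod measurableSet_Ioo
  have hφ : Integrable (fun p : ℝ×ℝ =>
      (Ioc (0:ℝ) (2*B+2) ×ˢ Ioo (-π) π).indicator (fun _ => (2:ℝ)) p) := by
    rw [integrable_indicator_iff hφmeas]
    refine integrableOn_const (ne_of_lt ?_)
    rw [Measure.volume_eq_prod, Measure.prod_prod, Real.volume_Ioc, Real.volume_Ioo]
    exact ENNReal.mul_lt_top ENNReal.ofReal_lt_top ENNReal.ofReal_lt_top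
  have P2 : IntegrableOn
      (fun p : ℝ × ℝ => p.1 * g (p.1 * Real.cos p.2, p.1 * Real.sin p.2))
      polarCoord.target := by
    apply Integrable.mono' hφ.restrict
    · exact ((measurable_fst.mul (gmeas.comp
        ((measurable_fst.mul (Real.measurable_cos.comp measurable_snd)).prodMk
          (measurable_fst.mul (Real.measurable_sin.comp measurable_snd))))).aestronglyMeasurable)
    · filter_upwards [ae_restrict_mem hs] with p hp
      obtain ⟨hp1, hp2⟩ := hp
      simp only [mem_Ioi] at hp1
      set x : ℝ × ℝ := (p.1 * Real.cos p.2, p.1 * Real.sin p.2) with hx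
      by_cases hball : x ∈ Metric.closedBall (0:ℝ×ℝ) B
      · have hnorm : ‖x‖ ≤ B := by
          simpa [Metric.mem_closedBall, dist_zero_right] using hball
        have hlow : p.1 / 2 ≤ ‖x‖ := norm_polar_lower hp1.le
        have hxpos : 0 < ‖x‖ := lt_of_lt_of_le (by linarith) hlow
        have hgx : g x = 1/‖x‖ := by rw [hg]; simp [indicator_of_mem hball]
        have hmem : p ∈ Ioc (0:ℝ) (2*B+2) ×ˢ Ioo (-π) π := by
          constructor
          · exact ⟨hp1, by linarith⟩
          · exact hp2
        rw [indicator_of_mem hmem]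
        rw [hgx]
        have hval : p.1 * (1/‖x‖) ≤ 2 := by
          rw [mul_one_div, div_le_iff₀ hxpos]
          linarith
        rw [Real.norm_eq_abs, abs_of_nonneg (by positivity)]
        exact hval
      · have hgx : g x = 0 := by rw [hg]; simp [indicator_of_notMem hball]
        rw [hgx, mul_zero, norm_zero]
        exact indicator_nonneg (fun _ _ => by norm_num) p
  refine P2.congr_fun (fun p hp => ?_) hs
  obtain ⟨hp1, _⟩ := hp
  simp only [mem_Ioi] at hp1
  rw [polB_det, polarCoord_symm_apply, smul_eq_mul, abs_of_pos hp1]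

lemma int_ball_c (B : ℝ) (c : ℝ × ℝ) :
    Integrable (fun x : ℝ × ℝ =>
      (Metric.closedBall c B).indicator (fun y => 1/‖y - c‖) x) := by
  have h := (int_ball B).comp_sub_right c
  refine h.congr (Filter.Eventually.of_forall fun x => ?_)
  by_cases hx : x ∈ Metric.closedBall c B
  · have hx' : x - c ∈ Metric.closedBall (0:ℝ×ℝ) B := by
      simpa [Metric.mem_closedBall, dist_eq_norm] using hx
    simp only [indicator_of_mem hx', indicator_of_mem hx]
  · have hx' : x - c ∉ Metric.closedBall (0:ℝ×ℝ) B := by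
      simpa [Metric.mem_closedBall, dist_eq_norm] using hx
    simp only [indicator_of_notMem hx', indicator_of_notMem hx]

lemma sqrt_ge_abs_left (x y : ℝ) : |x| ≤ Real.sqrt (x^2 + y^2) := by
  rw [← Real.sqrt_sq_eq_abs]
  exact Real.sqrt_le_sqrt (by nlinarith [sq_nonneg y])

lemma sqrt_ge_abs_right (x y : ℝ) : |y| ≤ Real.sqrt (x^2 + y^2) := by
  rw [← Real.sqrt_sq_eq_abs]
  exact Real.sqrt_le_sqrt (by nlinarith [sq_nonneg x])

-- the 2D integrability of r / dist((r cos θ, r sin θ), (R,0))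
lemma L3 (R : ℝ) (hR : 0 ≤ R) :
    IntegrableOn (fun q : ℝ × ℝ =>
        q.1 / Real.sqrt ((q.1 * Real.cos q.2 - R)^2 + (q.1 * Real.sin q.2)^2))
      (Ioc (0:ℝ) 5 ×ˢ Ioo (0:ℝ) (2*π)) := by
  set s : Set (ℝ × ℝ) := Ioc (0:ℝ) 5 ×ˢ Ioo (0:ℝ) (2*π) with hsdef
  have hs : MeasurableSet s := measurableSet_Ioc.prod measurableSet_Ioo
  set c : ℝ × ℝ := (R, 0) with hc
  set g : ℝ × ℝ → ℝ := fun x => (Metric.closedBall c (R+6)).indicator (fun y => 1/‖y - c‖) x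
    with hg
  have hgint : Integrable g := int_ball_c (R+6) c
  have hderiv : ∀ p ∈ s, HasFDerivWithinAt (⇑polarCoord.symm) (polB p) s p :=
    fun p _ => (polB_deriv p).hasFDerivWithinAt
  have key := (integrableOn_image_iff_integrableOn_abs_det_fderiv_smul volume hs hderiv
    injOn_polar g).1 hgint.integrableOn
  -- bound target function by the transformed integrand
  apply Integrable.mono' key
  · refine Measurable.aestronglyMeasurable ?_
    apply Measurable.div measurable_fst
    apply Measurable.sqrt
    exact ((measurable_fst.mul (Real.measurable_cos.comp measurable_snd)).sub
      measurable_const).pow_const 2 |>.add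
      ((measurable_fst.mul (Real.measurable_sin.comp measurable_snd)).pow_const 2)
  · filter_upwards [ae_restrict_mem hs] with q hq
    obtain ⟨hq1, hq2⟩ := hq
    simp only [mem_Ioc] at hq1
    simp only [mem_Ioo] at hq2
    set x : ℝ × ℝ := polarCoord.symm q with hx
    have hxval : x = (q.1 * Real.cos q.2, q.1 * Real.sin q.2) := by
      rw [hx, polarCoord_symm_apply]
    have hApos : 0 < (q.1 * Real.cos q.2 - R)^2 + (q.1 * Real.sin q.2)^2 :=
      aux_pos hR hq1.1 hq2.1 hq2.2
    set a : ℝ := Real.sqrt ((q.1 * Real.cos q.2 - R)^2 + (q.1 * Real.sin q.2)^2) with ha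
    have hapos : 0 < a := Real.sqrt_pos.2 hApos
    -- the sup-norm distance
    have hxc : x - c = (q.1 * Real.cos q.2 - R, q.1 * Real.sin q.2) := by
      rw [hxval, hc]; simp [Prod.ext_iff]
    have hnorm_le_a : ‖x - c‖ ≤ a := by
      rw [hxc, Prod.norm_def]
      simp only [Real.norm_eq_abs]
      exact max_le (sqrt_ge_abs_left _ _) (sqrt_ge_abs_right _ _)
    have hnormpos : 0 < ‖x - c‖ := by
      rw [hxc]
      rw [norm_pos_iff]
      intro h0
      rw [Prod.ext_iff] at h0
      simp only at h0
      rw [h0.1, h0.2] at hApos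
      simp at hApos
    -- x is in the closed ball
    have hball : x ∈ Metric.closedBall c (R+6) := by
      rw [Metric.mem_closedBall, dist_eq_norm, hxc, Prod.norm_def]
      simp only [Real.norm_eq_abs]
      have h1 : |q.1 * Real.cos q.2 - R| ≤ q.1 * |Real.cos q.2| + R := by
        rw [abs_sub_comm]
        calc |R - q.1 * Real.cos q.2| ≤ |R| + |q.1 * Real.cos q.2| := abs_sub _ _
          _ = R + q.1 * |Real.cos q.2| := by
              rw [abs_of_nonneg hR, abs_mul, abs_of_pos hq1.1]
          _ = q.1 * |Real.cos q.2| + R := by ring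
      have h2 : q.1 * |Real.cos q.2| ≤ 5 := by
        calc q.1 * |Real.cos q.2| ≤ q.1 * 1 :=
            mul_le_mul_of_nonneg_left (Real.abs_cos_le_one _) hq1.1.le
          _ ≤ 5 := by linarith [hq1.2]
      have h3 : |q.1 * Real.sin q.2| ≤ 5 := by
        rw [abs_mul, abs_of_pos hq1.1]
        calc q.1 * |Real.sin q.2| ≤ q.1 * 1 :=
            mul_le_mul_of_nonneg_left (Real.abs_sin_le_one _) hq1.1.le
          _ ≤ 5 := by linarith [hq1.2]
      apply max_le <;> linarith
    have hgx : g x = 1/‖x - c‖ := by rw [hg]; simp [indicator_of_mem hball]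
    rw [Real.norm_eq_abs, abs_of_nonneg (div_nonneg hq1.1.le hapos.le)]
    rw [polB_det, hgx, smul_eq_mul, abs_of_pos hq1.1, mul_one_div]
    apply div_le_div_of_nonneg_left hq1.1.le hnormpos hnorm_le_a

lemma zint_bound {K : ℝ} (hK : 0 < K) :
    ∫ z in Icc (-0.2:ℝ) 0.2, (K + z^2)⁻¹ ≤ π / Real.sqrt K := by
  set a : ℝ := Real.sqrt K with ha
  have hapos : 0 < a := Real.sqrt_pos.2 hK
  have haK : a^2 = K := Real.sq_sqrt hK.le
  have hIcc : (∫ z in Icc (-0.2:ℝ) 0.2, (K + z^2)⁻¹)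
      = ∫ z in (-0.2:ℝ)..0.2, (K + z^2)⁻¹ := by
    rw [MeasureTheory.integral_Icc_eq_integral_Ioc,
      intervalIntegral.integral_of_le (by norm_num : (-0.2:ℝ) ≤ 0.2)]
  have calc1 : (∫ z in (-0.2:ℝ)..0.2, (K + z^2)⁻¹)
      = a⁻¹ * a⁻¹ * ∫ z in (-0.2:ℝ)..0.2, (1 + (z/a)^2)⁻¹ := by
    rw [mul_assoc, ← intervalIntegral.integral_const_mul, ← intervalIntegral.integral_const_mul]
    apply intervalIntegral.integral_congr
    intro z _
    rw [← haK]
    field_simp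
  have calc2 : (∫ z in (-0.2:ℝ)..0.2, (1 + (z/a)^2)⁻¹)
      = a * ((0.2/a).arctan - (-0.2/a).arctan) := by
    rw [intervalIntegral.integral_comp_div (f := fun u => (1 + u^2)⁻¹) hapos.ne',
      integral_inv_one_add_sq, smul_eq_mul]
  rw [hIcc, calc1, calc2]
  have harc : (0.2/a).arctan - (-0.2/a).arctan ≤ π := by
    have h1 := Real.arctan_lt_pi_div_two (0.2/a)
    have h2 := Real.neg_pi_div_two_lt_arctan (-0.2/a)
    linarith
  have : a⁻¹ * a⁻¹ * (a * ((0.2/a).arctan - (-0.2/a).arctan))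
      = a⁻¹ * ((0.2/a).arctan - (-0.2/a).arctan) := by
    field_simp
  rw [this, div_eq_inv_mul π a]
  apply mul_le_mul_of_nonneg_left harc (inv_nonneg.2 hapos.le)

lemma L4 (R : ℝ) (hR : 0 ≤ R) :
    IntegrableOn (fun q : (ℝ × ℝ) × ℝ =>
        q.1.1 / ((q.1.1 * Real.cos q.1.2 - R)^2 + (q.1.1 * Real.sin q.1.2)^2 + q.2^2))
      ((Ioc (0:ℝ) 5 ×ˢ Ioo (0:ℝ) (2*π)) ×ˢ Icc (-0.2:ℝ) 0.2) := by
  set A : Set (ℝ×ℝ) := Ioc (0:ℝ) 5 ×ˢ Ioo (0:ℝ) (2*π) with hA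
  set Bz : Set ℝ := Icc (-0.2:ℝ) 0.2 with hBz
  have hAmeas : MeasurableSet A := measurableSet_Ioc.prod measurableSet_Ioo
  set F : (ℝ×ℝ)×ℝ → ℝ := fun q =>
    q.1.1 / ((q.1.1 * Real.cos q.1.2 - R)^2 + (q.1.1 * Real.sin q.1.2)^2 + q.2^2) with hF
  have hFmeas : Measurable F := by
    apply Measurable.div (measurable_fst.fst)
    exact (((measurable_fst.fst.mul
        (Real.measurable_cos.comp measurable_fst.snd)).sub measurable_const).pow_const 2).add
      (((measurable_fst.fst.mul
        (Real.measurable_sin.comp measurable_fst.snd)).pow_const 2)) |>.add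
      (measurable_snd.pow_const 2)
  have hrestrict : (volume : Measure ((ℝ×ℝ)×ℝ)).restrict (A ×ˢ Bz)
      = (volume.restrict A).prod (volume.restrict Bz) := by
    rw [Measure.prod_restrict, ← Measure.volume_eq_prod]
  rw [IntegrableOn, hrestrict,
    integrable_prod_iff (hFmeas.aestronglyMeasurable)]
  constructor
  · filter_upwards [ae_restrict_mem hAmeas] with q hq
    obtain ⟨hq1, hq2⟩ := hq
    simp only [mem_Ioc] at hq1
    simp only [mem_Ioo] at hq2
    have hKpos : 0 < (q.1 * Real.cos q.2 - R)^2 + (q.1 * Real.sin q.2)^2 :=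
      aux_pos hR hq1.1 hq2.1 hq2.2
    have hcont : Continuous (fun z : ℝ => F (q, z)) := by
      show Continuous fun z : ℝ =>
        q.1 / ((q.1 * Real.cos q.2 - R) ^ 2 + (q.1 * Real.sin q.2) ^ 2 + z ^ 2)
      apply Continuous.div continuous_const (by fun_prop)
      intro z
      positivity
    exact hcont.integrableOn_Icc
  · apply Integrable.mono' ((L3 R hR).const_mul π)
    · exact (hFmeas.norm.aestronglyMeasurable).integral_prod_right'
    · filter_upwards [ae_restrict_mem hAmeas] with q hq
      obtain ⟨hq1, hq2⟩ := hq
      simp only [mem_Ioc] at hq1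
      simp only [mem_Ioo] at hq2
      set K : ℝ := (q.1 * Real.cos q.2 - R)^2 + (q.1 * Real.sin q.2)^2 with hK
      have hKpos : 0 < K := aux_pos hR hq1.1 hq2.1 hq2.2
      have hptwise : ∀ y : ℝ, ‖F (q, y)‖ = q.1 * (K + y^2)⁻¹ := by
        intro y
        rw [Real.norm_eq_abs, abs_of_nonneg (div_nonneg hq1.1.le (by positivity)),
          div_eq_mul_inv]
      have heq : (∫ y, ‖F (q, y)‖ ∂(volume.restrict Bz))
          = q.1 * ∫ y, (K + y^2)⁻¹ ∂(volume.restrict Bz) := by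
        rw [← integral_const_mul]
        exact integral_congr_ae (Filter.Eventually.of_forall hptwise)
      rw [Real.norm_eq_abs, abs_of_nonneg
        (integral_nonneg fun y => norm_nonneg _), heq]
      have hb := zint_bound hKpos
      calc q.1 * ∫ y, (K + y^2)⁻¹ ∂(volume.restrict Bz)
          ≤ q.1 * (π / Real.sqrt K) := mul_le_mul_of_nonneg_left hb hq1.1.le
        _ = π * (q.1 / Real.sqrt K) := by ring

lemma L5 (R : ℝ) (hR : 0 ≤ R) :
    IntegrableOn (fun p : ℝ × ℝ × ℝ =>
        p.1 / ((p.1 * Real.cos p.2.1 - R)^2 + (p.1 * Real.sin p.2.1)^2 + p.2.2^2))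
      (Ioc (0:ℝ) 5 ×ˢ Ioo (0:ℝ) (2*π) ×ˢ Icc (-0.2:ℝ) 0.2) := by
  set T : Set (ℝ × ℝ × ℝ) := Ioc (0:ℝ) 5 ×ˢ Ioo (0:ℝ) (2*π) ×ˢ Icc (-0.2:ℝ) 0.2 with hT
  have hTmeas : MeasurableSet T :=
    measurableSet_Ioc.prod (measurableSet_Ioo.prod measurableSet_Icc)
  set G : ℝ × ℝ × ℝ → ℝ := fun p =>
    p.1 / ((p.1 * Real.cos p.2.1 - R)^2 + (p.1 * Real.sin p.2.1)^2 + p.2.2^2) with hG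
  have hmp : MeasurePreserving (MeasurableEquiv.prodAssoc : (ℝ × ℝ) × ℝ ≃ᵐ ℝ × ℝ × ℝ)
      volume volume := by
    have h := measurePreserving_prodAssoc (volume : Measure ℝ) (volume : Measure ℝ)
      (volume : Measure ℝ)
    rw [Measure.volume_eq_prod, Measure.volume_eq_prod, Measure.volume_eq_prod]
    exact h
  have hmpr := hmp.restrict_preimage hTmeas
  have hemb := (MeasurableEquiv.prodAssoc :
    (ℝ × ℝ) × ℝ ≃ᵐ ℝ × ℝ × ℝ).measurableEmbedding
  rw [IntegrableOn, ← hmpr.integrable_comp_emb hemb]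
  have hpre : (MeasurableEquiv.prodAssoc : (ℝ × ℝ) × ℝ ≃ᵐ ℝ × ℝ × ℝ) ⁻¹' T
      = (Ioc (0:ℝ) 5 ×ˢ Ioo (0:ℝ) (2*π)) ×ˢ Icc (-0.2:ℝ) 0.2 := by
    rw [hT]
    exact Equiv.prod_assoc_preimage
  rw [hpre]
  exact L4 R hR


/-- For a measurable, bounded density `ρ₀` supported in
`[0,5] × [-0.2, 0.2]`, the integrand of the non-relativistic velocity formula
is Lebesgue integrable on the region `(0,∞) × (0,2π) × ℝ` for every `R ≥ 0`. -/
theorem nonrelativistic_velocity_integrand_integrable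
    (ρ₀ : ℝ × ℝ → ℝ) (hmeas : Measurable ρ₀)
    (hbdd : ∃ M : ℝ, ∀ p : ℝ × ℝ, |ρ₀ p| ≤ M)
    (hsupp : Function.support ρ₀ ⊆ Icc (0 : ℝ) 5 ×ˢ Icc (-0.2 : ℝ) 0.2) :
    ∀ R : ℝ, 0 ≤ R →
      IntegrableOn
        (fun p : ℝ × ℝ × ℝ =>
          ρ₀ (p.1, p.2.2) * (R - p.1 * Real.cos p.2.1) /
              (Real.sqrt ((p.1 * Real.cos p.2.1 - R) ^ 2
                  + p.1 ^ 2 * Real.sin p.2.1 ^ 2 + p.2.2 ^ 2)) ^ 3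
            * p.1)
        (Ioi (0 : ℝ) ×ˢ Ioo (0 : ℝ) (2 * Real.pi) ×ˢ (univ : Set ℝ)) := by
  intro R hR
  obtain ⟨M, hM⟩ := hbdd
  have hM0 : 0 ≤ M := le_trans (abs_nonneg _) (hM (0, 0))
  set S : Set (ℝ × ℝ × ℝ) := Ioi (0:ℝ) ×ˢ Ioo (0:ℝ) (2*π) ×ˢ (univ : Set ℝ) with hS
  have hSmeas : MeasurableSet S :=
    measurableSet_Ioi.prod (measurableSet_Ioo.prod MeasurableSet.univ)
  set T : Set (ℝ × ℝ × ℝ) := Ioc (0:ℝ) 5 ×ˢ Ioo (0:ℝ) (2*π) ×ˢ Icc (-0.2:ℝ) 0.2 with hT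
  have hTmeas : MeasurableSet T :=
    measurableSet_Ioc.prod (measurableSet_Ioo.prod measurableSet_Icc)
  set g : ℝ × ℝ × ℝ → ℝ := fun p =>
    T.indicator (fun p => M * (p.1 /
      ((p.1 * Real.cos p.2.1 - R)^2 + (p.1 * Real.sin p.2.1)^2 + p.2.2^2))) p with hg
  have hgint : Integrable g := by
    rw [hg, integrable_indicator_iff hTmeas]
    exact (L5 R hR).const_mul M
  apply Integrable.mono' hgint.integrableOn
  · -- measurability of the integrand
    refine Measurable.aestronglyMeasurable ?_
    apply Measurable.mul _ measurable_fst
    apply Measurable.div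
    · exact (hmeas.comp (measurable_fst.prodMk measurable_snd.snd)).mul
        (measurable_const.sub (measurable_fst.mul
          (Real.measurable_cos.comp measurable_snd.fst)))
    · apply Measurable.pow_const
      apply Measurable.sqrt
      exact (((measurable_fst.mul (Real.measurable_cos.comp measurable_snd.fst)).sub
          measurable_const).pow_const 2).add
        (((measurable_fst.pow_const 2).mul
          ((Real.measurable_sin.comp measurable_snd.fst).pow_const 2))) |>.add
        (measurable_snd.snd.pow_const 2)
  · filter_upwards [ae_restrict_mem hSmeas] with p hp
    obtain ⟨hp1, hp2, -⟩ := hp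
    simp only [mem_Ioi] at hp1
    simp only [mem_Ioo] at hp2
    by_cases hρ : ρ₀ (p.1, p.2.2) = 0
    · rw [hρ]
      simp only [zero_mul, zero_div, norm_zero]
      refine indicator_nonneg (fun x hx => ?_) p
      obtain ⟨hx1, -, -⟩ := hx
      simp only [mem_Ioc] at hx1
      exact mul_nonneg hM0 (div_nonneg hx1.1.le (by positivity))
    · have hmemsupp : (p.1, p.2.2) ∈ Icc (0:ℝ) 5 ×ˢ Icc (-0.2:ℝ) 0.2 := hsupp hρ
      obtain ⟨hx1, hx2⟩ := hmemsupp
      simp only [mem_Icc] at hx1 hx2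
      have hpT : p ∈ T := by
        refine ⟨⟨hp1, hx1.2⟩, hp2, ?_⟩
        simpa [mem_Icc] using hx2
      rw [hg]
      beta_reduce
      rw [Set.indicator_of_mem hpT]
      -- notation
      set r : ℝ := p.1
      set θ : ℝ := p.2.1
      set z : ℝ := p.2.2
      set D : ℝ := (r * Real.cos θ - R)^2 + (r * Real.sin θ)^2 + z^2 with hD
      have hDalt : (r * Real.cos θ - R)^2 + r^2 * Real.sin θ^2 + z^2 = D := by
        rw [hD, mul_pow]
      have hKpos : 0 < (r * Real.cos θ - R)^2 + (r * Real.sin θ)^2 :=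
        aux_pos hR hp1 hp2.1 hp2.2
      have hDpos : 0 < D := by rw [hD]; nlinarith [sq_nonneg z]
      set d : ℝ := Real.sqrt ((r * Real.cos θ - R)^2 + r^2 * Real.sin θ^2 + z^2) with hd
      have hdD : d = Real.sqrt D := by rw [hd, hDalt]
      have hdpos : 0 < d := by rw [hdD]; exact Real.sqrt_pos.2 hDpos
      have hd2 : d^2 = D := by rw [hdD]; exact Real.sq_sqrt hDpos.le
      have hd3 : d^3 = d * D := by rw [← hd2]; ring
      have hRc : |R - r * Real.cos θ| ≤ d := by
        rw [hdD, ← Real.sqrt_sq_eq_abs]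
        apply Real.sqrt_le_sqrt
        rw [hD]
        nlinarith [sq_nonneg (r * Real.sin θ), sq_nonneg z]
      have habs : ‖ρ₀ (r, z) * (R - r * Real.cos θ) / d^3 * r‖
          = |ρ₀ (r, z)| * |R - r * Real.cos θ| / d^3 * r := by
        rw [Real.norm_eq_abs, abs_mul, abs_div, abs_mul,
          abs_of_pos (by positivity : (0:ℝ) < d^3), abs_of_pos hp1]
      rw [habs]
      have hnum : |ρ₀ (r, z)| * |R - r * Real.cos θ| ≤ M * d :=
        mul_le_mul (hM _) hRc (abs_nonneg _) hM0
      calc |ρ₀ (r, z)| * |R - r * Real.cos θ| / d^3 * r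
          ≤ M * d / d^3 * r := by
            apply mul_le_mul_of_nonneg_right _ hp1.le
            exact div_le_div_of_nonneg_right hnum (by positivity)
        _ = M * (r / D) := by
            rw [hd3]
            field_simp [hdpos.ne', hDpos.ne']
      done
end

section
/- Let ρ₀ : ℝ × ℝ → ℝ be measurable, bounded, with support contained in [0,5] × [−0.2, 0.2], and let v : ℝ → ℝ be a measurable function with v(r)² ≤ 1 − δ for all r, for some fixed δ > 0. Then for every R ≥ 0 the function (r, θ, z) ↦ (ρ₀(r, z)/√(1 − v(r)²)) · (R − r·cos θ)/d³ · r, where d = √((r·cos θ − R)² + r²·sin²θ + z²), is Lebesgue integrable on (0, ∞) × (0, 2π) × ℝ, so the relativistic velocity integral ∫₀^∞ ∫₀^{2π} ∫_{−∞}^∞ (ρ₀(r,z)/√(1 − v(r)²)) · (R − r·cos θ)/d³ · r dz dθ dr is well-defined (finite). -/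
open MeasureTheory Set

namespace RelVel

open Real
open scoped ENNReal

theorem lintegral_polar (g : ℝ × ℝ → ℝ≥0∞) :
    ∫⁻ p in polarCoord.target, ENNReal.ofReal p.1 * g (polarCoord.symm p) = ∫⁻ p, g p := by
  set B : ℝ × ℝ → ℝ × ℝ →L[ℝ] ℝ × ℝ := fun p =>
    LinearMap.toContinuousLinearMap (Matrix.toLin (Module.Basis.finTwoProd ℝ) (Module.Basis.finTwoProd ℝ)
      !![cos p.2, -p.1 * sin p.2; sin p.2, p.1 * cos p.2])
  have A : ∀ p ∈ polarCoord.target, HasFDerivWithinAt polarCoord.symm (B p) polarCoord.target p :=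
    fun p _ => (hasFDerivAt_polarCoord_symm p).hasFDerivWithinAt
  have B_det : ∀ p, (B p).det = p.1 := by
    intro p
    conv_rhs => rw [← one_mul p.1, ← cos_sq_add_sin_sq p.2]
    simp only [B, neg_mul, LinearMap.det_toContinuousLinearMap, LinearMap.det_toLin,
      Matrix.det_fin_two_of, sub_neg_eq_add]
    ring
  symm
  calc
    ∫⁻ p, g p = ∫⁻ p in polarCoord.source, g p := by
      rw [← setLIntegral_univ]
      exact (setLIntegral_congr polarCoord_source_ae_eq_univ.symm)
    _ = ∫⁻ p in polarCoord.symm '' polarCoord.target, g p := by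
      rw [polarCoord.symm_image_target_eq_source]
    _ = ∫⁻ p in polarCoord.target, ENNReal.ofReal |(B p).det| * g (polarCoord.symm p) := by
      apply lintegral_image_eq_lintegral_abs_det_fderiv_mul volume
        polarCoord.open_target.measurableSet A
      rw [← polarCoord.symm_source]
      exact polarCoord.symm.injOn
    _ = ∫⁻ p in polarCoord.target, ENNReal.ofReal p.1 * g (polarCoord.symm p) := by
      apply setLIntegral_congr_fun polarCoord.open_target.measurableSet
      intro x hx
      dsimp only
      rw [B_det, abs_of_pos hx.1]

theorem zint (C s : ℝ) (hC : 0 ≤ C) (hs : 0 < s) :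
    ∫⁻ z : ℝ, ENNReal.ofReal (C / (s + z ^ 2)) ≤ ENNReal.ofReal (C * π / Real.sqrt s) := by
  have hb : Real.sqrt s ≠ 0 := (Real.sqrt_pos.2 hs).ne'
  have hfun : (fun z : ℝ => C / (s + z ^ 2))
      = fun z : ℝ => (C / s) • ((fun w : ℝ => (1 + w ^ 2)⁻¹) (z / Real.sqrt s)) := by
    funext z
    have : (Real.sqrt s) ^ 2 = s := Real.sq_sqrt hs.le
    simp only [smul_eq_mul, div_pow, this]
    field_simp
  have hint : Integrable (fun z : ℝ => C / (s + z ^ 2)) := by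
    rw [hfun]
    exact (integrable_inv_one_add_sq.comp_div hb).smul (C / s)
  rw [← ofReal_integral_eq_lintegral_ofReal hint
    (Filter.Eventually.of_forall fun z => by positivity)]
  apply ENNReal.ofReal_le_ofReal
  rw [hfun, integral_smul, Measure.integral_comp_div (fun w : ℝ => (1 + w ^ 2)⁻¹) (Real.sqrt s),
    integral_univ_inv_one_add_sq]
  rw [abs_of_nonneg (Real.sqrt_nonneg s)]
  rw [smul_eq_mul, smul_eq_mul]
  have : C / s * (Real.sqrt s * π) = C * π / Real.sqrt s := by
    rw [eq_div_iff hb]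
    field_simp
    linear_combination C * Real.mul_self_sqrt hs.le
  rw [this]

theorem twoD (R C : ℝ) (hR : 0 ≤ R) (hC : 0 ≤ C) :
    ∫⁻ w : ℝ × ℝ in {w : ℝ × ℝ | w.1 ^ 2 + w.2 ^ 2 ≤ 25},
      ENNReal.ofReal (C / Real.sqrt ((w.1 - R) ^ 2 + w.2 ^ 2)) < ⊤ := by
  set ρ : ℝ := R + 10 with hρdef
  have hρ : 0 ≤ ρ := by positivity
  set D : Set (ℝ × ℝ) := {w : ℝ × ℝ | w.1 ^ 2 + w.2 ^ 2 ≤ 25} with hD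
  set D' : Set (ℝ × ℝ) := {w : ℝ × ℝ | w.1 ^ 2 + w.2 ^ 2 ≤ ρ ^ 2} with hD'
  have hDm : MeasurableSet D' := by
    apply measurableSet_le (by fun_prop) measurable_const
  set G : ℝ × ℝ → ℝ≥0∞ := fun u => ENNReal.ofReal (C / Real.sqrt (u.1 ^ 2 + u.2 ^ 2)) with hG
  have mp : MeasurePreserving (fun u : ℝ × ℝ => u + (R, 0)) volume volume :=
    measurePreserving_add_right volume (R, 0)
  have emb : MeasurableEmbedding (fun u : ℝ × ℝ => u + (R, 0)) :=
    (Homeomorph.addRight ((R : ℝ), (0 : ℝ))).measurableEmbedding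
  have step1 : ∫⁻ w in D, ENNReal.ofReal (C / Real.sqrt ((w.1 - R) ^ 2 + w.2 ^ 2))
      = ∫⁻ u in (fun u : ℝ × ℝ => u + (R, 0)) ⁻¹' D, G u := by
    rw [← mp.setLIntegral_comp_preimage_emb emb]
    congr 1
    funext u
    simp only [G, Prod.fst_add, Prod.snd_add, add_zero, add_sub_cancel_right]
  have hsub : (fun u : ℝ × ℝ => u + (R, 0)) ⁻¹' D ⊆ D' := by
    rintro ⟨a, b⟩ h
    simp only [mem_preimage, D, mem_setOf_eq, Prod.fst_add, Prod.snd_add, add_zero] at h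
    simp only [D', mem_setOf_eq, hρdef]
    have h5 : (a + R) ^ 2 ≤ 25 := by nlinarith [sq_nonneg b]
    have ht : -5 ≤ a + R := by nlinarith
    nlinarith [mul_nonneg hR (by linarith : (0:ℝ) ≤ a + R + 5)]
  calc ∫⁻ w in D, ENNReal.ofReal (C / Real.sqrt ((w.1 - R) ^ 2 + w.2 ^ 2))
      = ∫⁻ u in (fun u : ℝ × ℝ => u + (R, 0)) ⁻¹' D, G u := step1
    _ ≤ ∫⁻ u in D', G u := lintegral_mono_set hsub
    _ = ∫⁻ u, D'.indicator G u := by rw [lintegral_indicator hDm]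
    _ = ∫⁻ p in polarCoord.target, ENNReal.ofReal p.1 * D'.indicator G (polarCoord.symm p) :=
        (lintegral_polar _).symm
    _ ≤ ∫⁻ p in polarCoord.target,
          (Icc (0 : ℝ) ρ ×ˢ Icc (-π) π).indicator (fun _ => ENNReal.ofReal C) p := by
        apply setLIntegral_mono' polarCoord.open_target.measurableSet
        intro p hp
        rw [polarCoord_target] at hp
        obtain ⟨hp1, hp2⟩ := hp
        simp only [mem_Ioi] at hp1
        rw [polarCoord_symm_apply]
        by_cases hmem : ((p.1 * cos p.2, p.1 * sin p.2) : ℝ × ℝ) ∈ D'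
        · have hp1ρ : p.1 ≤ ρ := by
            have := hmem
            simp only [D', mem_setOf_eq] at this
            have h2 : p.1 ^ 2 ≤ ρ ^ 2 := by nlinarith [sin_sq_add_cos_sq p.2]
            nlinarith
          rw [indicator_of_mem hmem, indicator_of_mem
            (by exact ⟨⟨hp1.le, hp1ρ⟩, hp2.1.le, hp2.2.le⟩)]
          have : ((p.1 * cos p.2) ^ 2 + (p.1 * sin p.2) ^ 2) = p.1 ^ 2 := by
            nlinarith [sin_sq_add_cos_sq p.2]
          rw [hG]
          simp only [this, Real.sqrt_sq hp1.le]
          rw [← ENNReal.ofReal_mul hp1.le, mul_div_cancel₀ _ hp1.ne']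
        · rw [indicator_of_notMem hmem, mul_zero]
          exact zero_le
    _ ≤ ∫⁻ p, (Icc (0 : ℝ) ρ ×ˢ Icc (-π) π).indicator (fun _ => ENNReal.ofReal C) p :=
        setLIntegral_le_lintegral _ _
    _ = ENNReal.ofReal C * volume (Icc (0 : ℝ) ρ ×ˢ Icc (-π) π) := by
        rw [lintegral_indicator (measurableSet_Icc.prod measurableSet_Icc)]
        simp [lintegral_const, Measure.restrict_apply]
    _ < ⊤ := by
        apply ENNReal.mul_lt_top ENNReal.ofReal_lt_top
        rw [Measure.volume_eq_prod, Measure.prod_prod, Real.volume_Icc, Real.volume_Icc]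
        exact ENNReal.mul_lt_top ENNReal.ofReal_lt_top ENNReal.ofReal_lt_top

theorem core (R C : ℝ) (hR : 0 ≤ R) (hC : 0 ≤ C) :
    ∫⁻ q : (ℝ × ℝ) × ℝ in
        ({w : ℝ × ℝ | w.1 ^ 2 + w.2 ^ 2 ≤ 25} ×ˢ Icc (-0.2 : ℝ) 0.2),
      ENNReal.ofReal (C / ((q.1.1 - R) ^ 2 + q.1.2 ^ 2 + q.2 ^ 2)) < ⊤ := by
  have hmeas : Measurable fun q : (ℝ × ℝ) × ℝ =>
      ENNReal.ofReal (C / ((q.1.1 - R) ^ 2 + q.1.2 ^ 2 + q.2 ^ 2)) := by fun_prop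
  rw [Measure.volume_eq_prod, ← Measure.prod_restrict, lintegral_prod _ hmeas.aemeasurable]
  have hP : (volume : Measure (ℝ × ℝ)) {((R : ℝ), (0 : ℝ))} = 0 := by
    rw [← Set.singleton_prod_singleton, Measure.volume_eq_prod, Measure.prod_prod,
      Real.volume_singleton, zero_mul]
  have hae : ∀ᵐ w : ℝ × ℝ ∂(volume.restrict {w : ℝ × ℝ | w.1 ^ 2 + w.2 ^ 2 ≤ 25}),
      (∫⁻ z in Icc (-0.2 : ℝ) 0.2, ENNReal.ofReal (C / ((w.1 - R) ^ 2 + w.2 ^ 2 + z ^ 2)))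
        ≤ ENNReal.ofReal (C * π / Real.sqrt ((w.1 - R) ^ 2 + w.2 ^ 2)) := by
    apply ae_restrict_of_ae
    have h0 : ∀ᵐ w : ℝ × ℝ, w ≠ ((R : ℝ), (0 : ℝ)) := by
      rw [ae_iff]
      convert hP using 2
      ext w
      simp
    filter_upwards [h0] with w hw
    have hs : 0 < (w.1 - R) ^ 2 + w.2 ^ 2 := by
      rcases lt_or_eq_of_le (by positivity : (0:ℝ) ≤ (w.1 - R) ^ 2 + w.2 ^ 2) with h | h
      · exact h
      · exfalso
        apply hw
        have h1 : w.1 - R = 0 := by nlinarith [sq_nonneg (w.1 - R), sq_nonneg w.2]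
        have h2 : w.2 = 0 := by nlinarith [sq_nonneg (w.1 - R), sq_nonneg w.2]
        ext <;> simp [h2] <;> linarith
    calc (∫⁻ z in Icc (-0.2 : ℝ) 0.2, ENNReal.ofReal (C / ((w.1 - R) ^ 2 + w.2 ^ 2 + z ^ 2)))
        ≤ ∫⁻ z : ℝ, ENNReal.ofReal (C / ((w.1 - R) ^ 2 + w.2 ^ 2 + z ^ 2)) :=
          setLIntegral_le_lintegral _ _
      _ ≤ ENNReal.ofReal (C * π / Real.sqrt ((w.1 - R) ^ 2 + w.2 ^ 2)) := zint C _ hC hs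
  calc ∫⁻ w in {w : ℝ × ℝ | w.1 ^ 2 + w.2 ^ 2 ≤ 25},
        ∫⁻ z in Icc (-0.2 : ℝ) 0.2, ENNReal.ofReal (C / ((w.1 - R) ^ 2 + w.2 ^ 2 + z ^ 2))
      ≤ ∫⁻ w in {w : ℝ × ℝ | w.1 ^ 2 + w.2 ^ 2 ≤ 25},
          ENNReal.ofReal (C * π / Real.sqrt ((w.1 - R) ^ 2 + w.2 ^ 2)) := lintegral_mono_ae hae
    _ < ⊤ := twoD R (C * π) hR (by positivity)

noncomputable def Vfun (R C : ℝ) : (ℝ × ℝ) × ℝ → ℝ≥0∞ :=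
  ({w : ℝ × ℝ | w.1 ^ 2 + w.2 ^ 2 ≤ 25} ×ˢ Icc (-0.2 : ℝ) 0.2).indicator
    (fun q => ENNReal.ofReal (C / ((q.1.1 - R) ^ 2 + q.1.2 ^ 2 + q.2 ^ 2)))

theorem Vfun_measurable (R C : ℝ) : Measurable (Vfun R C) := by
  apply Measurable.indicator (by fun_prop)
  exact (measurableSet_le (by fun_prop) measurable_const).prod measurableSet_Icc

theorem mid (R C : ℝ) (hR : 0 ≤ R) (hC : 0 ≤ C) :
    ∫⁻ p : ℝ × ℝ × ℝ in Ioi (0 : ℝ) ×ˢ Ioo (0 : ℝ) (2 * π) ×ˢ (univ : Set ℝ),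
      ENNReal.ofReal p.1 * Vfun R C ((p.1 * cos p.2.1, p.1 * sin p.2.1), p.2.2) < ⊤ := by
  have hVm := Vfun_measurable R C
  set F : ℝ × ℝ × ℝ → ℝ≥0∞ := fun p =>
    ENNReal.ofReal p.1 * Vfun R C ((p.1 * cos p.2.1, p.1 * sin p.2.1), p.2.2) with hF
  have hFm : Measurable F := by
    apply Measurable.mul (by fun_prop)
    exact hVm.comp (by fun_prop)
  set J : ℝ → ℝ → ℝ≥0∞ := fun r θ => ∫⁻ z, F (r, θ, z) with hJ
  have iter : ∫⁻ p in Ioi (0 : ℝ) ×ˢ Ioo (0 : ℝ) (2 * π) ×ˢ (univ : Set ℝ), F p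
      = ∫⁻ r in Ioi (0 : ℝ), ∫⁻ θ in Ioo (0 : ℝ) (2 * π), J r θ := by
    rw [Measure.volume_eq_prod, ← Measure.prod_restrict,
      lintegral_prod _ hFm.aemeasurable]
    congr 1
    funext r
    rw [Measure.volume_eq_prod, ← Measure.prod_restrict, Measure.restrict_univ,
      lintegral_prod _ (Measurable.aemeasurable (show Measurable fun y : ℝ × ℝ => F (r, y) from hFm.comp measurable_prodMk_left))]
  rw [iter]
  have hper : ∀ r : ℝ, ∫⁻ θ in Ioo (0 : ℝ) (2 * π), J r θ
      ≤ 2 * ∫⁻ θ in Ioo (-π) π, J r θ := by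
    intro r
    have cover : Ioo (0 : ℝ) (2 * π) ⊆ (Ioo (0 : ℝ) π ∪ {π}) ∪ Ioo π (2 * π) := by
      intro θ hθ
      rcases lt_trichotomy θ π with h | h | h
      · exact Or.inl (Or.inl ⟨hθ.1, h⟩)
      · exact Or.inl (Or.inr (by simp [h]))
      · exact Or.inr ⟨h, hθ.2⟩
    have htrans : ∫⁻ θ in Ioo π (2 * π), J r θ = ∫⁻ θ in Ioo (-π) 0, J r θ := by
      have mp2 : MeasurePreserving (fun θ : ℝ => θ + 2 * π) volume volume :=
        measurePreserving_add_right volume (2 * π)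
      have emb : MeasurableEmbedding (fun θ : ℝ => θ + 2 * π) :=
        (Homeomorph.addRight (2 * π)).measurableEmbedding
      have hpre : (fun θ : ℝ => θ + 2 * π) ⁻¹' Ioo π (2 * π) = Ioo (-π) 0 := by
        ext θ
        simp only [mem_preimage, mem_Ioo]
        constructor <;> intro h <;> constructor <;> linarith [h.1, h.2]
      rw [← mp2.setLIntegral_comp_preimage_emb emb, hpre]
      apply setLIntegral_congr_fun measurableSet_Ioo
      intro θ hθ
      simp only [hJ, hF, Real.cos_add_two_pi, Real.sin_add_two_pi]
    calc ∫⁻ θ in Ioo (0 : ℝ) (2 * π), J r θ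
        ≤ ∫⁻ θ in (Ioo (0 : ℝ) π ∪ {π}) ∪ Ioo π (2 * π), J r θ := lintegral_mono_set cover
      _ ≤ (∫⁻ θ in Ioo (0 : ℝ) π ∪ {π}, J r θ) + ∫⁻ θ in Ioo π (2 * π), J r θ :=
          lintegral_union_le _ _ _
      _ ≤ ((∫⁻ θ in Ioo (0 : ℝ) π, J r θ) + ∫⁻ θ in ({π} : Set ℝ), J r θ)
            + ∫⁻ θ in Ioo π (2 * π), J r θ := by
          gcongr
          exact lintegral_union_le _ _ _
      _ = (∫⁻ θ in Ioo (0 : ℝ) π, J r θ) + ∫⁻ θ in Ioo (-π) 0, J r θ := by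
          rw [setLIntegral_measure_zero _ _ Real.volume_singleton, add_zero, htrans]
      _ ≤ (∫⁻ θ in Ioo (-π) π, J r θ) + ∫⁻ θ in Ioo (-π) π, J r θ := by
          gcongr ?_ + ?_ <;> apply lintegral_mono_set
          · exact Ioo_subset_Ioo (by linarith [pi_pos]) le_rfl
          · exact Ioo_subset_Ioo le_rfl (by linarith [pi_pos])
      _ = 2 * ∫⁻ θ in Ioo (-π) π, J r θ := (two_mul _).symm
  set g : ℝ × ℝ → ℝ≥0∞ := fun w => ∫⁻ z, Vfun R C (w, z) with hg
  have hKm : Measurable fun p : ℝ × ℝ => J p.1 p.2 := by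
    apply Measurable.lintegral_prod_right' (f := fun q : (ℝ × ℝ) × ℝ => F (q.1.1, q.1.2, q.2))
    exact hFm.comp (by fun_prop)
  have hgm : Measurable g := by
    apply Measurable.lintegral_prod_right' (f := Vfun R C) hVm
  have hhm : Measurable fun p : ℝ × ℝ =>
      ENNReal.ofReal p.1 * g (p.1 * cos p.2, p.1 * sin p.2) := by
    apply Measurable.mul (by fun_prop)
    exact hgm.comp (by fun_prop)
  have reass : ∫⁻ r in Ioi (0 : ℝ), ∫⁻ θ in Ioo (-π) π, J r θ
      = ∫⁻ p in polarCoord.target, ENNReal.ofReal p.1 * g (polarCoord.symm p) := by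
    have e1 : ∫⁻ p in polarCoord.target, ENNReal.ofReal p.1 * g (polarCoord.symm p)
        = ∫⁻ p in Ioi (0 : ℝ) ×ˢ Ioo (-π) π,
            ENNReal.ofReal p.1 * g (p.1 * cos p.2, p.1 * sin p.2) := by
      rw [polarCoord_target]
      apply lintegral_congr fun p => ?_
      rw [polarCoord_symm_apply]
    rw [e1, Measure.volume_eq_prod, ← Measure.prod_restrict,
      lintegral_prod _ hhm.aemeasurable]
    apply lintegral_congr fun r => ?_
    apply lintegral_congr fun θ => ?_
    simp only [hJ, hF, hg]
    rw [lintegral_const_mul' _ _ ENNReal.ofReal_ne_top]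
  calc ∫⁻ r in Ioi (0 : ℝ), ∫⁻ θ in Ioo (0 : ℝ) (2 * π), J r θ
      ≤ ∫⁻ r in Ioi (0 : ℝ), 2 * ∫⁻ θ in Ioo (-π) π, J r θ := lintegral_mono fun r => hper r
    _ = 2 * ∫⁻ r in Ioi (0 : ℝ), ∫⁻ θ in Ioo (-π) π, J r θ :=
        lintegral_const_mul' _ _ (by norm_num)
    _ = 2 * ∫⁻ w, g w := by rw [reass, lintegral_polar]
    _ = 2 * ∫⁻ q : (ℝ × ℝ) × ℝ, Vfun R C q := by
        rw [hg, ← lintegral_prod _ hVm.aemeasurable, ← Measure.volume_eq_prod]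
    _ < ⊤ := by
        have : ∫⁻ q : (ℝ × ℝ) × ℝ, Vfun R C q
            = ∫⁻ q : (ℝ × ℝ) × ℝ in
                ({w : ℝ × ℝ | w.1 ^ 2 + w.2 ^ 2 ≤ 25} ×ˢ Icc (-0.2 : ℝ) 0.2),
              ENNReal.ofReal (C / ((q.1.1 - R) ^ 2 + q.1.2 ^ 2 + q.2 ^ 2)) := by
          rw [Vfun, lintegral_indicator]
          exact (measurableSet_le (by fun_prop) measurable_const).prod measurableSet_Icc
        rw [this]
        exact ENNReal.mul_lt_top (by norm_num) (core R C hR hC)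

end RelVel

open scoped ENNReal

/-- For a measurable, bounded density `ρ₀` supported in
`[0,5] × [-0.2, 0.2]` and a measurable velocity profile `v` with
`v(r)² ≤ 1 - δ` (for some fixed `δ > 0`), the integrand of the relativistic
velocity formula is Lebesgue integrable on `(0,∞) × (0,2π) × ℝ` for every `R ≥ 0`. -/
theorem relativistic_velocity_integrand_integrable
    (ρ₀ : ℝ × ℝ → ℝ) (hmeas : Measurable ρ₀)
    (hbdd : ∃ M : ℝ, ∀ p : ℝ × ℝ, |ρ₀ p| ≤ M)
    (hsupp : Function.support ρ₀ ⊆ Icc (0 : ℝ) 5 ×ˢ Icc (-0.2 : ℝ) 0.2)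
    (δ : ℝ) (hδ : 0 < δ)
    (v : ℝ → ℝ) (hv : Measurable v) (hv2 : ∀ r : ℝ, v r ^ 2 ≤ 1 - δ) :
    ∀ R : ℝ, 0 ≤ R →
      IntegrableOn
        (fun p : ℝ × ℝ × ℝ =>
          ρ₀ (p.1, p.2.2) / Real.sqrt (1 - v p.1 ^ 2) *
              ((R - p.1 * Real.cos p.2.1) /
                (Real.sqrt ((p.1 * Real.cos p.2.1 - R) ^ 2
                    + p.1 ^ 2 * Real.sin p.2.1 ^ 2 + p.2.2 ^ 2)) ^ 3)
            * p.1)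
        (Ioi (0 : ℝ) ×ˢ Ioo (0 : ℝ) (2 * Real.pi) ×ˢ (univ : Set ℝ)) := by
  intro R hR
  obtain ⟨M, hM⟩ := hbdd
  have hM0 : 0 ≤ M := le_trans (abs_nonneg _) (hM (0, 0))
  set C : ℝ := M / Real.sqrt δ with hCdef
  have hC0 : 0 ≤ C := div_nonneg hM0 (Real.sqrt_nonneg _)
  set f : ℝ × ℝ × ℝ → ℝ := fun p =>
    ρ₀ (p.1, p.2.2) / Real.sqrt (1 - v p.1 ^ 2) *
        ((R - p.1 * Real.cos p.2.1) /
          (Real.sqrt ((p.1 * Real.cos p.2.1 - R) ^ 2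
              + p.1 ^ 2 * Real.sin p.2.1 ^ 2 + p.2.2 ^ 2)) ^ 3)
      * p.1 with hfdef
  have hfm : Measurable f := by
    apply Measurable.mul _ measurable_fst
    apply Measurable.mul
    · exact (hmeas.comp (measurable_fst.prodMk (measurable_snd.comp measurable_snd))).div
        (Real.continuous_sqrt.measurable.comp (by fun_prop))
    · fun_prop
  have hSm : MeasurableSet
      (Ioi (0 : ℝ) ×ˢ Ioo (0 : ℝ) (2 * Real.pi) ×ˢ (univ : Set ℝ)) :=
    measurableSet_Ioi.prod (measurableSet_Ioo.prod MeasurableSet.univ)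
  refine ⟨hfm.aestronglyMeasurable, ?_⟩
  have key : ∀ p ∈ Ioi (0 : ℝ) ×ˢ Ioo (0 : ℝ) (2 * Real.pi) ×ˢ (univ : Set ℝ),
      (‖f p‖₊ : ℝ≥0∞)
        ≤ ENNReal.ofReal p.1 *
          RelVel.Vfun R C ((p.1 * Real.cos p.2.1, p.1 * Real.sin p.2.1), p.2.2) := by
    rintro ⟨r, θ, z⟩ hp
    simp only [mem_prod, mem_Ioi, mem_Ioo, mem_univ, and_true] at hp
    obtain ⟨hr, hθ⟩ := hp
    by_cases hρ : ρ₀ (r, z) = 0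
    · simp [hfdef, hρ]
    · have hmem : ((r : ℝ), (z : ℝ)) ∈ Icc (0 : ℝ) 5 ×ˢ Icc (-0.2 : ℝ) 0.2 :=
        hsupp (by simpa [Function.mem_support] using hρ)
      simp only [mem_prod, mem_Icc] at hmem
      obtain ⟨⟨hr0, hr5⟩, hz⟩ := hmem
      have hE : (((r * Real.cos θ, r * Real.sin θ) : ℝ × ℝ), z)
          ∈ {w : ℝ × ℝ | w.1 ^ 2 + w.2 ^ 2 ≤ 25} ×ˢ Icc (-0.2 : ℝ) 0.2 := by
        constructor
        · show (r * Real.cos θ) ^ 2 + (r * Real.sin θ) ^ 2 ≤ 25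
          have hrsq : r ^ 2 ≤ 25 := by nlinarith
          have hid : (r * Real.cos θ) ^ 2 + (r * Real.sin θ) ^ 2 = r ^ 2 := by
            linear_combination r ^ 2 * (Real.sin_sq_add_cos_sq θ)
          linarith
        · exact hz
      rw [RelVel.Vfun, indicator_of_mem hE]
      rw [← enorm_eq_nnnorm, Real.enorm_eq_ofReal_abs, ← ENNReal.ofReal_mul hr.le]
      apply ENNReal.ofReal_le_ofReal
      set s : ℝ := (r * Real.cos θ - R) ^ 2 + r ^ 2 * Real.sin θ ^ 2 + z ^ 2 with hsdef
      have hs' : ((r * Real.cos θ, r * Real.sin θ) : ℝ × ℝ).1 ^ 2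
          = (r * Real.cos θ) ^ 2 := rfl
      have hsalt : (r * Real.cos θ - R) ^ 2 + (r * Real.sin θ) ^ 2 + z ^ 2 = s := by
        rw [hsdef]; ring
      have hs0 : 0 ≤ s := by rw [hsdef]; positivity
      show |ρ₀ (r, z) / Real.sqrt (1 - v r ^ 2)
          * ((R - r * Real.cos θ) / (Real.sqrt s) ^ 3) * r|
        ≤ r * (C / ((r * Real.cos θ - R) ^ 2 + (r * Real.sin θ) ^ 2 + z ^ 2))
      rw [hsalt]
      have hA : |ρ₀ (r, z) / Real.sqrt (1 - v r ^ 2)| ≤ C := by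
        rw [abs_div, abs_of_nonneg (Real.sqrt_nonneg _), hCdef]
        exact div_le_div₀ hM0 (hM _) (Real.sqrt_pos.2 hδ)
          (Real.sqrt_le_sqrt (by linarith [hv2 r]))
      have hB : |(R - r * Real.cos θ) / (Real.sqrt s) ^ 3| ≤ 1 / s := by
        rcases eq_or_lt_of_le hs0 with h | h
        · rw [← h]
          simp
        · have hxb : |R - r * Real.cos θ| ≤ Real.sqrt s := by
            apply Real.abs_le_sqrt
            rw [hsdef]
            nlinarith [sq_nonneg (r * Real.sin θ), sq_nonneg z, sq_nonneg r,
              sq_nonneg (Real.sin θ)]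
          rw [abs_div, abs_of_nonneg (by positivity : (0:ℝ) ≤ (Real.sqrt s) ^ 3)]
          rw [div_le_div_iff₀ (by positivity) h]
          have h3 : (Real.sqrt s) ^ 3 = s * Real.sqrt s := by
            rw [pow_succ, Real.sq_sqrt h.le]
          rw [h3]
          calc |R - r * Real.cos θ| * s ≤ Real.sqrt s * s :=
                mul_le_mul_of_nonneg_right hxb h.le
            _ = 1 * (s * Real.sqrt s) := by ring
      calc |ρ₀ (r, z) / Real.sqrt (1 - v r ^ 2)
            * ((R - r * Real.cos θ) / (Real.sqrt s) ^ 3) * r|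
          = |ρ₀ (r, z) / Real.sqrt (1 - v r ^ 2)|
            * |(R - r * Real.cos θ) / (Real.sqrt s) ^ 3| * r := by
            rw [abs_mul, abs_mul, abs_of_pos hr]
        _ ≤ C * (1 / s) * r := by
            apply mul_le_mul_of_nonneg_right _ hr.le
            exact mul_le_mul hA hB (abs_nonneg _) hC0
        _ = r * (C / s) := by ring
  show HasFiniteIntegral f _
  rw [hasFiniteIntegral_iff_norm]
  calc ∫⁻ a in Ioi (0 : ℝ) ×ˢ Ioo (0 : ℝ) (2 * Real.pi) ×ˢ (univ : Set ℝ),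
        ENNReal.ofReal ‖f a‖
      ≤ ∫⁻ p in Ioi (0 : ℝ) ×ˢ Ioo (0 : ℝ) (2 * Real.pi) ×ˢ (univ : Set ℝ),
          ENNReal.ofReal p.1 *
            RelVel.Vfun R C ((p.1 * Real.cos p.2.1, p.1 * Real.sin p.2.1), p.2.2) := by
        apply setLIntegral_mono' hSm
        intro p hp
        rw [ofReal_norm]
        exact key p hp
      _ < ⊤ := RelVel.mid R C hR hC0
end

section
/- There exists a finite constant C such that for all R ≥ 0, ∫₀^5 ∫₀^{2π} ∫_{−0.2}^{0.2} r / ((r·cos θ − R)² + r²·sin²θ + z²) dz dθ dr ≤ C. That is, the integral of r/d² over the compact source region is bounded uniformly in the field-point radius R. -/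
open MeasureTheory Set

open Real

-- a.e. avoidance of a single point under a restricted volume
lemma ae_restrict_ne (s : Set ℝ) (t : ℝ) : ∀ᵐ x ∂(volume.restrict s), x ≠ t := by
  refine ae_iff.2 ?_
  have h : {x : ℝ | ¬ x ≠ t} = {t} := by ext x; simp
  rw [h]
  exact le_antisymm ((Measure.restrict_le_self _).trans_eq (Real.volume_singleton)) (zero_le)

-- z-integral bound
lemma zint_le (r A : ℝ) (hr : 0 ≤ r) (hA : 0 < A) :
    (∫ z in (-0.2 : ℝ)..0.2, r / (A + z ^ 2)) ≤ π * r / Real.sqrt A := by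
  set a := Real.sqrt A with ha
  have ha0 : 0 < a := Real.sqrt_pos.2 hA
  have haA : a ^ 2 = A := Real.sq_sqrt hA.le
  have hfun : ∀ z : ℝ, r / (A + z ^ 2) = (r / A) * (1 / (1 + (z / a) ^ 2)) := by
    intro z
    rw [← haA]
    have h1 : a ^ 2 + z ^ 2 > 0 := by positivity
    field_simp
    try ring
  have hcomp : (∫ z in (-0.2 : ℝ)..0.2, 1 / (1 + (z / a) ^ 2))
      = a * (Real.arctan (0.2 / a) - Real.arctan (-0.2 / a)) := by
    rw [intervalIntegral.integral_comp_div (fun t => 1 / (1 + t ^ 2)) ha0.ne']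
    rw [integral_one_div_one_add_sq]
    simp [smul_eq_mul]
  calc (∫ z in (-0.2 : ℝ)..0.2, r / (A + z ^ 2))
      = ∫ z in (-0.2 : ℝ)..0.2, (r / A) * (1 / (1 + (z / a) ^ 2)) := by
        simp only [hfun]
    _ = (r / A) * ∫ z in (-0.2 : ℝ)..0.2, 1 / (1 + (z / a) ^ 2) :=
        intervalIntegral.integral_const_mul _ _
    _ = (r / A) * (a * (Real.arctan (0.2 / a) - Real.arctan (-0.2 / a))) := by rw [hcomp]
    _ ≤ (r / A) * (a * π) := by
        have h1 : Real.arctan (0.2 / a) - Real.arctan (-0.2 / a) ≤ π := by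
          have h2 := Real.arctan_lt_pi_div_two (0.2 / a)
          have h3 := Real.neg_pi_div_two_lt_arctan (-0.2 / a)
          linarith
        have h4 : (0:ℝ) ≤ r / A := by positivity
        exact mul_le_mul_of_nonneg_left (mul_le_mul_of_nonneg_left h1 ha0.le) h4
    _ = π * r / a := by
        rw [← haA]; field_simp

-- core pointwise bound
lemma core_bound (r α s A : ℝ) (hr : 0 < r) (hα : 0 < α) (hs : 0 < s)
    (h1 : α ^ 2 ≤ A) (h2 : (r * s) ^ 2 ≤ A) :
    π * r / Real.sqrt A ≤ π * r ^ ((1:ℝ)/4) * α ^ (-(1:ℝ)/4) * s ^ (-(3:ℝ)/4) := by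
  have hrs : 0 < r * s := by positivity
  have hb : (0:ℝ) < α ^ ((1:ℝ)/4) * (r * s) ^ ((3:ℝ)/4) := by positivity
  have key : α ^ ((1:ℝ)/4) * (r * s) ^ ((3:ℝ)/4) ≤ Real.sqrt A := by
    rw [Real.le_sqrt hb.le (le_trans (by positivity) h1)]
    have expand : (α ^ ((1:ℝ)/4) * (r * s) ^ ((3:ℝ)/4)) ^ 2
        = α ^ ((1:ℝ)/2) * (r * s) ^ ((3:ℝ)/2) := by
      rw [mul_pow, ← Real.rpow_natCast (α ^ ((1:ℝ)/4)) 2, ← Real.rpow_natCast ((r*s) ^ ((3:ℝ)/4)) 2,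
        ← Real.rpow_mul hα.le, ← Real.rpow_mul hrs.le]
      norm_num
    rw [expand]
    rcases le_total α (r * s) with h | h
    · have h3 : α ^ ((1:ℝ)/2) ≤ (r * s) ^ ((1:ℝ)/2) := Real.rpow_le_rpow hα.le h (by norm_num)
      calc α ^ ((1:ℝ)/2) * (r * s) ^ ((3:ℝ)/2)
          ≤ (r * s) ^ ((1:ℝ)/2) * (r * s) ^ ((3:ℝ)/2) :=
            mul_le_mul_of_nonneg_right h3 (by positivity)
        _ = (r * s) ^ ((2:ℕ):ℝ) := by rw [← Real.rpow_add hrs]; norm_num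
        _ = (r * s) ^ 2 := Real.rpow_natCast _ 2
        _ ≤ A := h2
    · have h3 : (r * s) ^ ((3:ℝ)/2) ≤ α ^ ((3:ℝ)/2) := Real.rpow_le_rpow hrs.le h (by norm_num)
      calc α ^ ((1:ℝ)/2) * (r * s) ^ ((3:ℝ)/2)
          ≤ α ^ ((1:ℝ)/2) * α ^ ((3:ℝ)/2) := mul_le_mul_of_nonneg_left h3 (by positivity)
        _ = α ^ ((2:ℕ):ℝ) := by rw [← Real.rpow_add hα]; norm_num
        _ = α ^ 2 := Real.rpow_natCast _ 2
        _ ≤ A := h1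
  have step1 : π * r / Real.sqrt A ≤ π * r / (α ^ ((1:ℝ)/4) * (r * s) ^ ((3:ℝ)/4)) := by
    apply div_le_div_of_nonneg_left (by positivity) hb key
  refine step1.trans_eq ?_
  rw [Real.mul_rpow hr.le hs.le]
  rw [show (-(1:ℝ)/4) = -((1:ℝ)/4) by norm_num, show (-(3:ℝ)/4) = -((3:ℝ)/4) by norm_num,
    Real.rpow_neg hα.le, Real.rpow_neg hs.le]
  have hr34 : r ^ ((3:ℝ)/4) * r ^ ((1:ℝ)/4) = r := by
    rw [← Real.rpow_add hr]; norm_num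
  have hα4 : (0:ℝ) < α ^ ((1:ℝ)/4) := by positivity
  have hs4 : (0:ℝ) < s ^ ((3:ℝ)/4) := by positivity
  have hr4 : (0:ℝ) < r ^ ((3:ℝ)/4) := by positivity
  field_simp
  linear_combination -hr34


lemma sin_rpow_bound {θ : ℝ} (h0 : 0 < θ) (h2 : θ ≤ π/2) :
    Real.sin θ ^ (-(3:ℝ)/4) ≤ (π/2) ^ ((3:ℝ)/4) * θ ^ (-(3:ℝ)/4) := by
  have hπ := Real.pi_pos
  have hj : 2/π*θ ≤ Real.sin θ := Real.mul_le_sin h0.le h2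
  have hpos : 0 < 2/π*θ := by positivity
  have hsin : 0 < Real.sin θ := lt_of_lt_of_le hpos hj
  have h34 : ((2/π*θ) : ℝ) ^ ((3:ℝ)/4) ≤ Real.sin θ ^ ((3:ℝ)/4) :=
    Real.rpow_le_rpow hpos.le hj (by norm_num)
  have e : (-(3:ℝ)/4) = -((3:ℝ)/4) := by norm_num
  rw [e, Real.rpow_neg hsin.le, Real.rpow_neg h0.le]
  have step : (Real.sin θ ^ ((3:ℝ)/4))⁻¹ ≤ (((2/π*θ):ℝ) ^ ((3:ℝ)/4))⁻¹ := by
    apply inv_anti₀ (by positivity) h34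
  refine step.trans_eq ?_
  rw [Real.mul_rpow (by positivity) h0.le, mul_inv, ← Real.inv_rpow (by positivity), inv_div]

lemma theta_le (R r : ℝ) (hR : 0 ≤ R) (hr0 : 0 < r) (hrR : r ≠ R) :
    (∫ θ in (0:ℝ)..(2*π), ∫ z in (-0.2:ℝ)..0.2,
        r / ((r * Real.cos θ - R) ^ 2 + r ^ 2 * Real.sin θ ^ 2 + z ^ 2))
      ≤ π^2 + 4*π^2 * r ^ ((1:ℝ)/4) * |r - R| ^ (-(1:ℝ)/4) := by
  have hπ := Real.pi_pos
  set α := |r - R| with hαdef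
  have hα : 0 < α := abs_pos.2 (sub_ne_zero.2 hrR)
  set f : ℝ → ℝ := fun θ => ∫ z in (-0.2:ℝ)..0.2,
      r / ((r * Real.cos θ - R) ^ 2 + r ^ 2 * Real.sin θ ^ 2 + z ^ 2) with hf
  have hA1 : ∀ θ : ℝ, α^2 ≤ (r * Real.cos θ - R) ^ 2 + r ^ 2 * Real.sin θ ^ 2 := by
    intro θ
    have h1 := Real.cos_le_one θ
    have h2 := Real.sin_sq_add_cos_sq θ
    have h3 : α^2 = (r - R)^2 := sq_abs _
    nlinarith [mul_nonneg (mul_nonneg hr0.le hR) (sub_nonneg.2 h1)]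
  have hA2 : ∀ θ : ℝ, (r * Real.sin θ)^2 ≤ (r * Real.cos θ - R) ^ 2 + r ^ 2 * Real.sin θ ^ 2 := by
    intro θ; nlinarith [sq_nonneg (r * Real.cos θ - R)]
  have hApos : ∀ θ : ℝ, 0 < (r * Real.cos θ - R) ^ 2 + r ^ 2 * Real.sin θ ^ 2 :=
    fun θ => lt_of_lt_of_le (by positivity) (hA1 θ)
  have hr14 : (0:ℝ) ≤ r ^ ((1:ℝ)/4) := Real.rpow_nonneg hr0.le _
  have hα14 : (0:ℝ) ≤ α ^ (-(1:ℝ)/4) := Real.rpow_nonneg hα.le _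
  by_cases hInt : IntervalIntegrable f volume 0 (2*π)
  · have i1 : IntervalIntegrable f volume 0 (π/2) := by
      apply hInt.mono_set
      rw [uIcc_of_le (by linarith), uIcc_of_le (by linarith)]
      exact Icc_subset_Icc le_rfl (by linarith)
    have i2 : IntervalIntegrable f volume (π/2) (3*π/2) := by
      apply hInt.mono_set
      rw [uIcc_of_le (by linarith), uIcc_of_le (by linarith)]
      exact Icc_subset_Icc (by linarith) (by linarith)
    have i3 : IntervalIntegrable f volume (3*π/2) (2*π) := by
      apply hInt.mono_set
      rw [uIcc_of_le (by linarith), uIcc_of_le (by linarith)]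
      exact Icc_subset_Icc (by linarith) (by linarith)
    have i12 : IntervalIntegrable f volume 0 (3*π/2) := by
      apply hInt.mono_set
      rw [uIcc_of_le (by linarith), uIcc_of_le (by linarith)]
      exact Icc_subset_Icc le_rfl (by linarith)
    set K := π * r ^ ((1:ℝ)/4) * α ^ (-(1:ℝ)/4) * (π/2) ^ ((3:ℝ)/4) with hK
    have hKnn : 0 ≤ K := by
      apply mul_nonneg (mul_nonneg (mul_nonneg hπ.le hr14) hα14) (by positivity)
    have hrint : ∫ θ in (0:ℝ)..(π/2), θ ^ (-(3:ℝ)/4) = 4*(π/2) ^ ((1:ℝ)/4) := by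
      rw [integral_rpow (Or.inl (by norm_num))]
      rw [Real.zero_rpow (by norm_num)]
      norm_num
      ring
    have hKval : K * (4*(π/2) ^ ((1:ℝ)/4)) = 2*π^2 * r ^ ((1:ℝ)/4) * α ^ (-(1:ℝ)/4) := by
      have hhalf : (π/2:ℝ) ^ ((3:ℝ)/4) * (π/2) ^ ((1:ℝ)/4) = π/2 := by
        rw [← Real.rpow_add (by positivity)]; norm_num
      rw [hK]
      linear_combination (4*π*r ^ ((1:ℝ)/4)*α ^ (-(1:ℝ)/4)) * hhalf
    -- piece 1
    have hp1 : (∫ θ in (0:ℝ)..(π/2), f θ) ≤ 2*π^2 * r ^ ((1:ℝ)/4) * α ^ (-(1:ℝ)/4) := by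
      have hg : IntervalIntegrable (fun θ : ℝ => K * θ ^ (-(3:ℝ)/4)) volume 0 (π/2) :=
        (intervalIntegral.intervalIntegrable_rpow' (by norm_num)).const_mul K
      have hmono := intervalIntegral.integral_mono_ae_restrict (by linarith : (0:ℝ) ≤ π/2) i1 hg ?_
      · calc (∫ θ in (0:ℝ)..(π/2), f θ) ≤ ∫ θ in (0:ℝ)..(π/2), K * θ ^ (-(3:ℝ)/4) := hmono
          _ = K * ∫ θ in (0:ℝ)..(π/2), θ ^ (-(3:ℝ)/4) := intervalIntegral.integral_const_mul _ _
          _ = K * (4*(π/2) ^ ((1:ℝ)/4)) := by rw [hrint]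
          _ = _ := hKval
      · filter_upwards [ae_restrict_ne (Icc 0 (π/2)) 0, ae_restrict_mem measurableSet_Icc]
          with θ hne hmem
        have hθpos : 0 < θ := lt_of_le_of_ne hmem.1 (Ne.symm hne)
        have hθ2 : θ ≤ π/2 := hmem.2
        have hsin : 0 < Real.sin θ := Real.sin_pos_of_pos_of_lt_pi hθpos (by linarith)
        calc f θ ≤ π * r / Real.sqrt ((r * Real.cos θ - R) ^ 2 + r ^ 2 * Real.sin θ ^ 2) := by
              rw [hf]; exact zint_le r _ hr0.le (hApos θ)
          _ ≤ π * r ^ ((1:ℝ)/4) * α ^ (-(1:ℝ)/4) * Real.sin θ ^ (-(3:ℝ)/4) :=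
              core_bound r α (Real.sin θ) _ hr0 hα hsin (hA1 θ) (hA2 θ)
          _ ≤ π * r ^ ((1:ℝ)/4) * α ^ (-(1:ℝ)/4) * ((π/2) ^ ((3:ℝ)/4) * θ ^ (-(3:ℝ)/4)) := by
              apply mul_le_mul_of_nonneg_left (sin_rpow_bound hθpos hθ2)
              exact mul_nonneg (mul_nonneg hπ.le hr14) hα14
          _ = K * θ ^ (-(3:ℝ)/4) := by rw [hK]; ring
    -- piece 2
    have hp2 : (∫ θ in (π/2:ℝ)..(3*π/2), f θ) ≤ π^2 := by
      have hg : IntervalIntegrable (fun _ : ℝ => π) volume (π/2) (3*π/2) :=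
        intervalIntegrable_const
      have hmono := intervalIntegral.integral_mono_ae_restrict
        (by linarith : (π/2:ℝ) ≤ 3*π/2) i2 hg ?_
      · calc (∫ θ in (π/2:ℝ)..(3*π/2), f θ) ≤ ∫ _ in (π/2:ℝ)..(3*π/2), π := hmono
          _ = (3*π/2 - π/2) * π := by rw [intervalIntegral.integral_const]; simp [smul_eq_mul]
          _ = π^2 := by ring
      · filter_upwards [ae_restrict_mem measurableSet_Icc] with θ hmem
        have hcos : Real.cos θ ≤ 0 :=
          Real.cos_nonpos_of_pi_div_two_le_of_le hmem.1 (by linarith [hmem.2])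
        have hAr : r^2 ≤ (r * Real.cos θ - R) ^ 2 + r ^ 2 * Real.sin θ ^ 2 := by
          have h2 := Real.sin_sq_add_cos_sq θ
          nlinarith [mul_nonneg (mul_nonneg hr0.le hR) (neg_nonneg.2 hcos), sq_nonneg R]
        have hsq : r ≤ Real.sqrt ((r * Real.cos θ - R) ^ 2 + r ^ 2 * Real.sin θ ^ 2) := by
          have := Real.sqrt_le_sqrt hAr
          rwa [Real.sqrt_sq hr0.le] at this
        calc f θ ≤ π * r / Real.sqrt ((r * Real.cos θ - R) ^ 2 + r ^ 2 * Real.sin θ ^ 2) := by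
              rw [hf]; exact zint_le r _ hr0.le (hApos θ)
          _ ≤ π * r / r := by
              apply div_le_div_of_nonneg_left (by positivity) hr0 hsq
          _ = π := by field_simp
    -- piece 3
    have hp3 : (∫ θ in (3*π/2:ℝ)..(2*π), f θ) ≤ 2*π^2 * r ^ ((1:ℝ)/4) * α ^ (-(1:ℝ)/4) := by
      have hg : IntervalIntegrable (fun θ : ℝ => K * (2*π - θ) ^ (-(3:ℝ)/4)) volume (3*π/2) (2*π) := by
        have h1 : IntervalIntegrable (fun x : ℝ => x ^ (-(3:ℝ)/4)) volume (π/2) 0 :=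
          intervalIntegral.intervalIntegrable_rpow' (by norm_num)
        have h2 := (h1.comp_sub_left (2*π)).const_mul K
        have e1 : 2*π - π/2 = 3*π/2 := by ring
        have e2 : 2*π - 0 = 2*π := by ring
        rwa [e1, e2] at h2
      have hmono := intervalIntegral.integral_mono_ae_restrict
        (by linarith : (3*π/2:ℝ) ≤ 2*π) i3 hg ?_
      · have hcomp : (∫ θ in (3*π/2:ℝ)..(2*π), (2*π - θ) ^ (-(3:ℝ)/4))
            = ∫ u in (0:ℝ)..(π/2), u ^ (-(3:ℝ)/4) := by
          rw [intervalIntegral.integral_comp_sub_left (fun u : ℝ => u ^ (-(3:ℝ)/4)) (2*π)]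
          rw [show (2*π - 2*π : ℝ) = 0 by ring, show (2*π - 3*π/2 : ℝ) = π/2 by ring]
        calc (∫ θ in (3*π/2:ℝ)..(2*π), f θ)
            ≤ ∫ θ in (3*π/2:ℝ)..(2*π), K * (2*π - θ) ^ (-(3:ℝ)/4) := hmono
          _ = K * ∫ θ in (3*π/2:ℝ)..(2*π), (2*π - θ) ^ (-(3:ℝ)/4) :=
              intervalIntegral.integral_const_mul _ _
          _ = K * (4*(π/2) ^ ((1:ℝ)/4)) := by rw [hcomp, hrint]
          _ = _ := hKval
      · filter_upwards [ae_restrict_ne (Icc (3*π/2) (2*π)) (2*π), ae_restrict_mem measurableSet_Icc]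
          with θ hne hmem
        have hu0 : 0 < 2*π - θ := by
          rcases lt_or_eq_of_le hmem.2 with h | h
          · linarith
          · exact absurd h hne
        have hu2 : 2*π - θ ≤ π/2 := by linarith [hmem.1]
        have hsin : 0 < Real.sin (2*π - θ) := Real.sin_pos_of_pos_of_lt_pi hu0 (by linarith)
        have hA2' : (r * Real.sin (2*π - θ))^2 ≤ (r * Real.cos θ - R) ^ 2 + r ^ 2 * Real.sin θ ^ 2 := by
          rw [Real.sin_two_pi_sub]
          nlinarith [sq_nonneg (r * Real.cos θ - R)]
        calc f θ ≤ π * r / Real.sqrt ((r * Real.cos θ - R) ^ 2 + r ^ 2 * Real.sin θ ^ 2) := by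
              rw [hf]; exact zint_le r _ hr0.le (hApos θ)
          _ ≤ π * r ^ ((1:ℝ)/4) * α ^ (-(1:ℝ)/4) * Real.sin (2*π - θ) ^ (-(3:ℝ)/4) :=
              core_bound r α (Real.sin (2*π - θ)) _ hr0 hα hsin (hA1 θ) hA2'
          _ ≤ π * r ^ ((1:ℝ)/4) * α ^ (-(1:ℝ)/4) * ((π/2) ^ ((3:ℝ)/4) * (2*π - θ) ^ (-(3:ℝ)/4)) := by
              apply mul_le_mul_of_nonneg_left (sin_rpow_bound hu0 hu2)
              exact mul_nonneg (mul_nonneg hπ.le hr14) hα14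
          _ = K * (2*π - θ) ^ (-(3:ℝ)/4) := by rw [hK]; ring
    have hsplit : (∫ θ in (0:ℝ)..(2*π), f θ)
        = (∫ θ in (0:ℝ)..(π/2), f θ) + (∫ θ in (π/2:ℝ)..(3*π/2), f θ)
          + (∫ θ in (3*π/2:ℝ)..(2*π), f θ) := by
      rw [← intervalIntegral.integral_add_adjacent_intervals i12 i3,
        ← intervalIntegral.integral_add_adjacent_intervals i1 i2]
    calc (∫ θ in (0:ℝ)..(2*π), f θ)
        = _ := hsplit
      _ ≤ 2*π^2 * r ^ ((1:ℝ)/4) * α ^ (-(1:ℝ)/4) + π^2 + 2*π^2 * r ^ ((1:ℝ)/4) * α ^ (-(1:ℝ)/4) := by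
          exact add_le_add (add_le_add hp1 hp2) hp3
      _ = π^2 + 4*π^2 * r ^ ((1:ℝ)/4) * α ^ (-(1:ℝ)/4) := by ring
  · rw [intervalIntegral.integral_undef hInt]
    have h1 : 0 ≤ 4*π^2 * r ^ ((1:ℝ)/4) * α ^ (-(1:ℝ)/4) :=
      mul_nonneg (mul_nonneg (by positivity) hr14) hα14
    nlinarith [sq_nonneg π]

lemma rpow_int_eval (a : ℝ) : ∫ u in (0:ℝ)..a, u ^ (-(1:ℝ)/4) = (4/3)*a^((3:ℝ)/4) := by
  rw [integral_rpow (Or.inl (by norm_num)), Real.zero_rpow (by norm_num)]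
  norm_num
  ring

/-- The integral of `r/d²` over the compact source region
`[0,5] × [0,2π] × [-0.2,0.2]` is bounded by a finite constant `C`
uniformly in the field-point radius `R ≥ 0`. -/
theorem integral_r_div_d_sq_uniformly_bounded :
    ∃ C : ℝ, ∀ R : ℝ, 0 ≤ R →
      (∫ r in (0 : ℝ)..5, ∫ θ in (0 : ℝ)..(2 * Real.pi), ∫ z in (-0.2 : ℝ)..0.2,
          r / ((r * Real.cos θ - R) ^ 2 + r ^ 2 * Real.sin θ ^ 2 + z ^ 2)) ≤ C := by
  have hπ := Real.pi_pos
  set c : ℝ := 4*π^2*(5:ℝ)^((1:ℝ)/4) with hc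
  have hcpos : 0 < c := by rw [hc]; positivity
  have hX : (0:ℝ) ≤ (10:ℝ)^((3:ℝ)/4) := by positivity
  refine ⟨5*π^2 + 5*c + c*(8/3)*(10:ℝ)^((3:ℝ)/4), ?_⟩
  intro R hR
  set F : ℝ → ℝ := fun r => ∫ θ in (0 : ℝ)..(2 * Real.pi), ∫ z in (-0.2 : ℝ)..0.2,
      r / ((r * Real.cos θ - R) ^ 2 + r ^ 2 * Real.sin θ ^ 2 + z ^ 2) with hF
  by_cases hInt : IntervalIntegrable F volume 0 5
  swap
  · rw [intervalIntegral.integral_undef hInt]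
    nlinarith [sq_nonneg π, mul_nonneg hcpos.le hX]
  have hpt : ∀ r ∈ Icc (0:ℝ) 5, r ≠ 0 → r ≠ R →
      F r ≤ π^2 + c * |r - R| ^ (-(1:ℝ)/4) := by
    intro r hmem h0 hRne
    have hr0 : 0 < r := lt_of_le_of_ne hmem.1 (Ne.symm h0)
    have hth := theta_le R r hR hr0 hRne
    have hF' : F r = ∫ θ in (0 : ℝ)..(2 * Real.pi), ∫ z in (-0.2 : ℝ)..0.2,
        r / ((r * Real.cos θ - R) ^ 2 + r ^ 2 * Real.sin θ ^ 2 + z ^ 2) := by rw [hF]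
    rw [hF']
    refine hth.trans ?_
    have h54 : r^((1:ℝ)/4) ≤ (5:ℝ)^((1:ℝ)/4) := Real.rpow_le_rpow hr0.le hmem.2 (by norm_num)
    have hαnn : (0:ℝ) ≤ |r - R| ^ (-(1:ℝ)/4) := Real.rpow_nonneg (abs_nonneg _) _
    have hmul : 4*π^2*r^((1:ℝ)/4) * |r - R| ^ (-(1:ℝ)/4) ≤ c * |r - R| ^ (-(1:ℝ)/4) := by
      apply mul_le_mul_of_nonneg_right _ hαnn
      rw [hc]
      exact mul_le_mul_of_nonneg_left h54 (by positivity)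
    linarith
  have hrpint : ∀ a b : ℝ, IntervalIntegrable (fun x : ℝ => x ^ (-(1:ℝ)/4)) volume a b :=
    fun a b => intervalIntegral.intervalIntegrable_rpow' (by norm_num)
  rcases le_or_gt R 5 with hR5 | hR5
  · -- R ≤ 5
    have iA : IntervalIntegrable F volume 0 R := by
      apply hInt.mono_set
      rw [uIcc_of_le hR, uIcc_of_le (by norm_num)]
      exact Icc_subset_Icc le_rfl hR5
    have iB : IntervalIntegrable F volume R 5 := by
      apply hInt.mono_set
      rw [uIcc_of_le hR5, uIcc_of_le (by norm_num)]
      exact Icc_subset_Icc hR le_rfl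
    have gAint : IntervalIntegrable (fun r : ℝ => π^2 + c*(R - r)^(-(1:ℝ)/4)) volume 0 R := by
      apply IntervalIntegrable.add intervalIntegrable_const
      have h2 := ((hrpint R 0).comp_sub_left R).const_mul c
      simpa using h2
    have gBint : IntervalIntegrable (fun r : ℝ => π^2 + c*(r - R)^(-(1:ℝ)/4)) volume R 5 := by
      apply IntervalIntegrable.add intervalIntegrable_const
      have h2 := ((hrpint 0 (5 - R)).comp_sub_right R).const_mul c
      simpa using h2
    have hA : (∫ r in (0:ℝ)..R, F r) ≤ π^2*R + c*((4/3)*R^((3:ℝ)/4)) := by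
      have hmono := intervalIntegral.integral_mono_ae_restrict hR iA gAint ?_
      · refine hmono.trans_eq ?_
        rw [intervalIntegral.integral_add intervalIntegrable_const
            (by simpa using ((hrpint R 0).comp_sub_left R).const_mul c),
          intervalIntegral.integral_const, intervalIntegral.integral_const_mul,
          intervalIntegral.integral_comp_sub_left (fun u : ℝ => u^(-(1:ℝ)/4)) R,
          sub_self, sub_zero, rpow_int_eval]
        simp [smul_eq_mul]
        ring
      · filter_upwards [ae_restrict_ne (Icc 0 R) 0, ae_restrict_ne (Icc 0 R) R,
          ae_restrict_mem measurableSet_Icc] with r h0 hRne hmem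
        have := hpt r ⟨hmem.1, le_trans hmem.2 hR5⟩ h0 hRne
        rwa [show |r - R| = R - r by rw [abs_of_nonpos (by linarith [hmem.2])]; ring] at this
    have hB : (∫ r in (R:ℝ)..5, F r) ≤ π^2*(5-R) + c*((4/3)*(5-R)^((3:ℝ)/4)) := by
      have hmono := intervalIntegral.integral_mono_ae_restrict hR5 iB gBint ?_
      · refine hmono.trans_eq ?_
        rw [intervalIntegral.integral_add intervalIntegrable_const
            (by simpa using ((hrpint 0 (5 - R)).comp_sub_right R).const_mul c),
          intervalIntegral.integral_const, intervalIntegral.integral_const_mul,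
          intervalIntegral.integral_comp_sub_right (fun u : ℝ => u^(-(1:ℝ)/4)) R,
          sub_self, rpow_int_eval]
        simp [smul_eq_mul]
        ring
      · filter_upwards [ae_restrict_ne (Icc R 5) R, ae_restrict_mem measurableSet_Icc]
          with r hRne hmem
        have hr0 : r ≠ 0 := by
          intro h; rw [h] at hmem hRne
          have : R = 0 := le_antisymm hmem.1 hR  -- hmem.1 : R ≤ 0
          exact hRne this.symm
        have := hpt r ⟨le_trans hR hmem.1, hmem.2⟩ hr0 hRne
        rwa [show |r - R| = r - R by rw [abs_of_nonneg (by linarith [hmem.1])]] at this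
    have hsplit : (∫ r in (0:ℝ)..5, F r) = (∫ r in (0:ℝ)..R, F r) + ∫ r in (R:ℝ)..5, F r :=
      (intervalIntegral.integral_add_adjacent_intervals iA iB).symm
    have hb1 : R^((3:ℝ)/4) ≤ (10:ℝ)^((3:ℝ)/4) := Real.rpow_le_rpow hR (by linarith) (by norm_num)
    have hb2 : (5-R:ℝ)^((3:ℝ)/4) ≤ (10:ℝ)^((3:ℝ)/4) :=
      Real.rpow_le_rpow (by linarith) (by linarith) (by norm_num)
    rw [hsplit]
    nlinarith [mul_le_mul_of_nonneg_left hb1 hcpos.le, mul_le_mul_of_nonneg_left hb2 hcpos.le]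
  · rcases le_or_gt R 10 with hR10 | hR10
    · -- 5 < R ≤ 10
      have gint : IntervalIntegrable (fun r : ℝ => π^2 + c*(R - r)^(-(1:ℝ)/4)) volume 0 5 := by
        apply IntervalIntegrable.add intervalIntegrable_const
        have h2 := ((hrpint R (R-5)).comp_sub_left R).const_mul c
        have e1 : R - R = 0 := sub_self R
        have e2 : R - (R - 5) = 5 := by ring
        rwa [e1, e2] at h2
      have hmono := intervalIntegral.integral_mono_ae_restrict (by norm_num : (0:ℝ) ≤ 5)
        hInt gint ?_
      · have hval : (∫ r in (0:ℝ)..5, (π^2 + c*(R - r)^(-(1:ℝ)/4)))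
            = 5*π^2 + c * ∫ u in (R-5:ℝ)..R, u^(-(1:ℝ)/4) := by
          rw [intervalIntegral.integral_add intervalIntegrable_const
              (by
                have h2 := ((hrpint R (R-5)).comp_sub_left R).const_mul c
                have e1 : R - R = 0 := sub_self R
                have e2 : R - (R - 5) = 5 := by ring
                rwa [e1, e2] at h2),
            intervalIntegral.integral_const, intervalIntegral.integral_const_mul,
            intervalIntegral.integral_comp_sub_left (fun u : ℝ => u^(-(1:ℝ)/4)) R,
            sub_zero]
          simp [smul_eq_mul]
          try ring
        have hubd : (∫ u in (R-5:ℝ)..R, u^(-(1:ℝ)/4)) ≤ (4/3)*(10:ℝ)^((3:ℝ)/4) := by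
          have hadj := intervalIntegral.integral_add_adjacent_intervals
            (hrpint 0 (R-5)) (hrpint (R-5) R)
          have hnn : 0 ≤ ∫ u in (0:ℝ)..(R-5), u^(-(1:ℝ)/4) :=
            intervalIntegral.integral_nonneg (by linarith)
              (fun u hu => Real.rpow_nonneg hu.1 _)
          have hval0 : (∫ u in (0:ℝ)..R, u^(-(1:ℝ)/4)) = (4/3)*R^((3:ℝ)/4) := rpow_int_eval R
          have hb : R^((3:ℝ)/4) ≤ (10:ℝ)^((3:ℝ)/4) :=
            Real.rpow_le_rpow hR hR10 (by norm_num)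
          linarith
        have := hmono.trans_eq hval
        nlinarith [mul_le_mul_of_nonneg_left hubd hcpos.le]
      · filter_upwards [ae_restrict_ne (Icc 0 5) 0, ae_restrict_mem measurableSet_Icc]
          with r h0 hmem
        have hRne : r ≠ R := by intro h; rw [h] at hmem; linarith [hmem.2]
        have := hpt r hmem h0 hRne
        rwa [show |r - R| = R - r by rw [abs_of_nonpos (by linarith [hmem.2])]; ring] at this
    · -- R > 10
      have gint : IntervalIntegrable (fun _ : ℝ => π^2 + c) volume 0 5 := intervalIntegrable_const
      have hmono := intervalIntegral.integral_mono_ae_restrict (by norm_num : (0:ℝ) ≤ 5)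
        hInt gint ?_
      · have hval : (∫ _ in (0:ℝ)..5, (π^2 + c)) = 5*(π^2 + c) := by
          rw [intervalIntegral.integral_const]; simp [smul_eq_mul]; try ring
        have := hmono.trans_eq hval
        nlinarith [mul_nonneg hcpos.le hX]
      · filter_upwards [ae_restrict_ne (Icc 0 5) 0, ae_restrict_mem measurableSet_Icc]
          with r h0 hmem
        have hRne : r ≠ R := by intro h; rw [h] at hmem; linarith [hmem.2]
        have h1 : (1:ℝ) ≤ |r - R| := by
          rw [abs_of_nonpos (by linarith [hmem.2])]
          linarith [hmem.2]
        have h2 : |r - R| ^ (-(1:ℝ)/4) ≤ 1 :=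
          Real.rpow_le_one_of_one_le_of_nonpos h1 (by norm_num)
        have := hpt r hmem h0 hRne
        nlinarith [hcpos]
end

section
/- Let ρ₀ : ℝ × ℝ → ℝ be nonnegative, measurable, bounded, supported in [0,5] × [−0.2, 0.2], let δ ∈ (0,1), and let v, ṽ : ℝ → ℝ be measurable functions with v(r)², ṽ(r)² ≤ 1 − δ for all r. Then there is a constant L (depending only on δ and on sup ρ₀) such that for every R in [0,5], the relativistic velocity integrals satisfy |∫₀^∞∫₀^{2π}∫_{−∞}^∞ (ρ₀(r,z)/√(1 − v(r)²)) (R − r cos θ)/d³ · r dz dθ dr − ∫₀^∞∫₀^{2π}∫_{−∞}^∞ (ρ₀(r,z)/√(1 − ṽ(r)²)) (R − r cos θ)/d³ · r dz dθ dr| ≤ L · sup_r |v(r)² − ṽ(r)²|, where d = √((r cos θ − R)² + r² sin²θ + z²). -/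
open MeasureTheory Set Real



lemma aux_sqrt_lip {δ x y : ℝ} (hδ : 0 < δ) (hx : δ ≤ x) (hy : δ ≤ y) :
    |(Real.sqrt x)⁻¹ - (Real.sqrt y)⁻¹| ≤ |x - y| / (2 * δ * Real.sqrt δ) := by
  have hsd : 0 < Real.sqrt δ := Real.sqrt_pos.2 hδ
  have hsx : 0 < Real.sqrt x := Real.sqrt_pos.2 (hδ.trans_le hx)
  have hsy : 0 < Real.sqrt y := Real.sqrt_pos.2 (hδ.trans_le hy)
  have hdx : Real.sqrt δ ≤ Real.sqrt x := Real.sqrt_le_sqrt hx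
  have hdy : Real.sqrt δ ≤ Real.sqrt y := Real.sqrt_le_sqrt hy
  have hx2 : Real.sqrt x ^ 2 = x := Real.sq_sqrt (hδ.le.trans hx)
  have hy2 : Real.sqrt y ^ 2 = y := Real.sq_sqrt (hδ.le.trans hy)
  have hd2 : Real.sqrt δ ^ 2 = δ := Real.sq_sqrt hδ.le
  have key : (Real.sqrt x)⁻¹ - (Real.sqrt y)⁻¹
      = (y - x) / (Real.sqrt x * Real.sqrt y * (Real.sqrt x + Real.sqrt y)) := by
    rw [inv_sub_inv hsx.ne' hsy.ne']
    rw [div_eq_div_iff (by positivity) (by positivity)]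
    have e1 : (√y - √x) * (√x + √y) = y - x := by nlinarith [hx2, hy2]
    calc (√y - √x) * (√x * √y * (√x + √y)) = ((√y - √x) * (√x + √y)) * (√x * √y) := by ring
      _ = (y - x) * (√x * √y) := by rw [e1]
  rw [key, abs_div, abs_sub_comm y x]
  have hpos : 0 < Real.sqrt x * Real.sqrt y * (Real.sqrt x + Real.sqrt y) := by positivity
  rw [abs_of_pos hpos]
  apply div_le_div_of_nonneg_left (abs_nonneg _) (by positivity)
  nlinarith [hdx, hdy, hd2]

lemma aux_q_lower {R r : ℝ} (hR : 0 ≤ R) (hr : 0 ≤ r) (θ : ℝ) :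
    (r - R) ^ 2 ≤ (r * Real.cos θ - R) ^ 2 + r ^ 2 * Real.sin θ ^ 2 := by
  nlinarith [Real.sin_sq_add_cos_sq θ, Real.cos_le_one θ, mul_nonneg hr hR,
    mul_nonneg (mul_nonneg hr hR) (sub_nonneg.2 (Real.cos_le_one θ))]

lemma aux_kernel_bound (R r θ z : ℝ) :
    |(R - r * Real.cos θ) /
        (Real.sqrt ((r * Real.cos θ - R) ^ 2 + r ^ 2 * Real.sin θ ^ 2 + z ^ 2)) ^ 3|
      ≤ (((r * Real.cos θ - R) ^ 2 + r ^ 2 * Real.sin θ ^ 2) + z ^ 2)⁻¹ := by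
  set q : ℝ := (r * Real.cos θ - R) ^ 2 + r ^ 2 * Real.sin θ ^ 2 with hq
  have hq0 : 0 ≤ q := by positivity
  have hD0 : 0 ≤ q + z ^ 2 := by positivity
  rcases eq_or_lt_of_le hD0 with h0 | hD
  · -- q + z^2 = 0 : numerator vanishes
    have hqz : q = 0 := by nlinarith [sq_nonneg z]
    have h1 : (r * Real.cos θ - R) ^ 2 = 0 := by
      nlinarith [sq_nonneg (r * Real.sin θ), hq, mul_pow r (Real.sin θ) 2]
    have h2 : R - r * Real.cos θ = 0 := by nlinarith [sq_nonneg (r * Real.cos θ - R)]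
    rw [show (r * Real.cos θ - R) ^ 2 + r ^ 2 * Real.sin θ ^ 2 + z ^ 2 = q + z ^ 2 by rw [hq],
      h2]
    simp [← h0]
  · have hd : 0 < Real.sqrt (q + z ^ 2) := Real.sqrt_pos.2 hD
    have hd2 : Real.sqrt (q + z ^ 2) ^ 2 = q + z ^ 2 := Real.sq_sqrt hD0
    rw [show (r * Real.cos θ - R) ^ 2 + r ^ 2 * Real.sin θ ^ 2 + z ^ 2 = q + z ^ 2 by rw [hq]]
    rw [abs_div, abs_of_pos (pow_pos hd 3)]
    have hnum : |R - r * Real.cos θ| ≤ Real.sqrt (q + z ^ 2) := by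
      rw [abs_sub_comm]
      have : |r * Real.cos θ - R| = Real.sqrt ((r * Real.cos θ - R) ^ 2) :=
        (Real.sqrt_sq_eq_abs _).symm
      rw [this]
      apply Real.sqrt_le_sqrt; nlinarith [sq_nonneg (r * Real.sin θ), mul_pow r (Real.sin θ) 2, sq_nonneg z, mul_nonneg (sq_nonneg r) (sq_nonneg (Real.sin θ))]
    calc |R - r * Real.cos θ| / Real.sqrt (q + z ^ 2) ^ 3
        ≤ Real.sqrt (q + z ^ 2) / Real.sqrt (q + z ^ 2) ^ 3 := by
          apply div_le_div_of_nonneg_right hnum (by positivity) |>.trans_eq rfl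
      _ = (q + z ^ 2)⁻¹ := by
          rw [show Real.sqrt (q + z ^ 2) ^ 3 = Real.sqrt (q + z ^ 2) * Real.sqrt (q + z ^ 2) ^ 2 by ring, hd2]
          rw [div_mul_eq_div_div, div_self hd.ne', one_div]

lemma aux_z_integral {q : ℝ} (hq : 0 < q) :
    ∫ z in Icc (-(0.2 : ℝ)) (0.2 : ℝ), (q + z ^ 2)⁻¹ ≤ π / Real.sqrt q := by
  have hsq : 0 < Real.sqrt q := Real.sqrt_pos.2 hq
  have hsq2 : Real.sqrt q ^ 2 = q := Real.sq_sqrt hq.le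
  have key : ∀ z : ℝ, (q + z ^ 2)⁻¹ = q⁻¹ * (1 + (z / Real.sqrt q) ^ 2)⁻¹ := by
    intro z
    rw [div_pow, hsq2]
    rw [← mul_inv]
    congr 1
    field_simp
  rw [MeasureTheory.integral_Icc_eq_integral_Ioc,
    ← intervalIntegral.integral_of_le (by norm_num : (-(0.2:ℝ)) ≤ 0.2)]
  simp_rw [key]
  rw [intervalIntegral.integral_const_mul]
  have comp : ∫ z in (-(0.2:ℝ))..(0.2:ℝ), (1 + (z / Real.sqrt q) ^ 2)⁻¹
      = Real.sqrt q • ∫ x in (-(0.2:ℝ)/Real.sqrt q)..((0.2:ℝ)/Real.sqrt q), (1 + x ^ 2)⁻¹ :=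
    intervalIntegral.integral_comp_div (fun x => (1 + x ^ 2)⁻¹) hsq.ne'
  rw [comp, integral_inv_one_add_sq, smul_eq_mul]
  have harc : arctan (0.2 / Real.sqrt q) - arctan (-(0.2) / Real.sqrt q) ≤ π := by
    have h1 := Real.arctan_lt_pi_div_two (0.2 / Real.sqrt q)
    have h2 := Real.neg_pi_div_two_lt_arctan (-(0.2) / Real.sqrt q)
    linarith
  calc q⁻¹ * (Real.sqrt q * (arctan (0.2 / Real.sqrt q) - arctan (-(0.2) / Real.sqrt q)))
      ≤ q⁻¹ * (Real.sqrt q * π) := by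
        apply mul_le_mul_of_nonneg_left _ (by positivity)
        exact mul_le_mul_of_nonneg_left harc hsq.le
    _ = π / Real.sqrt q := by
        rw [eq_div_iff hsq.ne']
        have : q⁻¹ * (Real.sqrt q * π) * Real.sqrt q = q⁻¹ * q * π := by
          linear_combination q⁻¹ * π * hsq2
        rw [this, inv_mul_cancel₀ hq.ne', one_mul]

lemma aux_polar_integrableOn_iff (f : ℝ × ℝ → ℝ) :
    IntegrableOn (fun p : ℝ × ℝ => p.1 * f (polarCoord.symm p)) polarCoord.target volume
      ↔ Integrable f volume := by
  set B : ℝ × ℝ → ℝ × ℝ →L[ℝ] ℝ × ℝ := fun p =>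
    LinearMap.toContinuousLinearMap (Matrix.toLin (Module.Basis.finTwoProd ℝ) (Module.Basis.finTwoProd ℝ)
      !![Real.cos p.2, -p.1 * Real.sin p.2; Real.sin p.2, p.1 * Real.cos p.2]) with hB
  have hder : ∀ p ∈ polarCoord.target,
      HasFDerivWithinAt polarCoord.symm (B p) polarCoord.target p := fun p _ =>
    (hasFDerivAt_polarCoord_symm p).hasFDerivWithinAt
  have B_det : ∀ p, (B p).det = p.1 := by
    intro p
    conv_rhs => rw [← one_mul p.1, ← Real.cos_sq_add_sin_sq p.2]
    simp only [hB, neg_mul, LinearMap.det_toContinuousLinearMap, LinearMap.det_toLin,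
      Matrix.det_fin_two_of, sub_neg_eq_add]
    ring
  have hinj : InjOn polarCoord.symm polarCoord.target := by
    have := polarCoord.symm.injOn
    rwa [OpenPartialHomeomorph.symm_source] at this
  have himg : polarCoord.symm '' polarCoord.target = polarCoord.source :=
    polarCoord.symm_image_target_eq_source
  have key := integrableOn_image_iff_integrableOn_abs_det_fderiv_smul volume
    polarCoord.open_target.measurableSet hder hinj f
  rw [himg] at key
  have congr1 : IntegrableOn (fun p : ℝ × ℝ => p.1 * f (polarCoord.symm p)) polarCoord.target volume
      ↔ IntegrableOn (fun p : ℝ × ℝ => |(B p).det| • f (polarCoord.symm p))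
          polarCoord.target volume := by
    apply integrableOn_congr_fun _ polarCoord.open_target.measurableSet
    intro p hp
    simp only [smul_eq_mul, B_det p, abs_of_pos (mem_Ioi.1 hp.1)]
  rw [congr1, ← key]
  constructor
  · intro h
    have : IntegrableOn f univ volume := by
      rwa [IntegrableOn, Measure.restrict_congr_set polarCoord_source_ae_eq_univ.symm]
    rwa [IntegrableOn, Measure.restrict_univ] at this
  · intro h
    exact h.integrableOn

noncomputable def auxH : ℝ × ℝ → ℝ := fun w =>
  ({w : ℝ × ℝ | w.1 ^ 2 + w.2 ^ 2 ≤ 100}).indicator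
    (fun w => (Real.sqrt (w.1 ^ 2 + w.2 ^ 2))⁻¹) w

lemma auxH_meas : Measurable auxH := by
  apply Measurable.indicator
  · exact ((continuous_fst.pow 2).add (continuous_snd.pow 2)).sqrt.measurable.inv
  · exact measurableSet_le (by fun_prop) measurable_const

lemma auxH_nonneg (w : ℝ × ℝ) : 0 ≤ auxH w := by
  unfold auxH
  apply Set.indicator_nonneg
  intro w _
  positivity

lemma aux_target_eq : ∀ p ∈ polarCoord.target,
    p.1 * auxH (polarCoord.symm p)
      = (Ioc (0:ℝ) 10 ×ˢ Ioo (-π) π).indicator (fun _ => (1:ℝ)) p := by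
  rintro ⟨r, θ⟩ hp
  rw [polarCoord_target] at hp
  obtain ⟨hr, hθ⟩ := hp
  simp only [mem_Ioi] at hr
  have hsq : (r * Real.cos θ) ^ 2 + (r * Real.sin θ) ^ 2 = r ^ 2 := by
    have := Real.sin_sq_add_cos_sq θ; nlinarith
  unfold auxH
  simp only [polarCoord_symm_apply]
  by_cases h10 : r ≤ 10
  · rw [Set.indicator_of_mem, Set.indicator_of_mem]
    · rw [hsq, Real.sqrt_sq hr.le, mul_inv_cancel₀ hr.ne']
    · exact ⟨⟨hr, h10⟩, hθ⟩
    · simp only [mem_setOf_eq, hsq]; nlinarith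
  · rw [Set.indicator_of_notMem, Set.indicator_of_notMem, mul_zero]
    · rintro ⟨⟨_, h⟩, _⟩; exact h10 h
    · simp only [mem_setOf_eq, hsq]; intro h; apply h10; nlinarith

lemma aux_indicator_integrableOn :
    IntegrableOn ((Ioc (0:ℝ) 10 ×ˢ Ioo (-π) π).indicator (fun _ => (1:ℝ)))
      polarCoord.target volume := by
  apply Integrable.integrableOn
  rw [integrable_indicator_iff (measurableSet_Ioc.prod measurableSet_Ioo)]
  refine integrableOn_const (hs := ?_) (hC := enorm_ne_top)
  rw [Measure.volume_eq_prod, Measure.prod_prod, Real.volume_Ioc, Real.volume_Ioo]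
  exact (ENNReal.mul_lt_top ENNReal.ofReal_lt_top ENNReal.ofReal_lt_top).ne

lemma aux_indicator_integral :
    ∫ p in polarCoord.target, (Ioc (0:ℝ) 10 ×ˢ Ioo (-π) π).indicator (fun _ => (1:ℝ)) p
      = 20 * π := by
  rw [setIntegral_indicator (measurableSet_Ioc.prod measurableSet_Ioo)]
  have hsub : polarCoord.target ∩ (Ioc (0:ℝ) 10 ×ˢ Ioo (-π) π)
      = Ioc (0:ℝ) 10 ×ˢ Ioo (-π) π := by
    rw [polarCoord_target]
    apply inter_eq_right.2
    exact prod_mono Ioc_subset_Ioi_self subset_rfl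
  rw [hsub, setIntegral_const, smul_eq_mul, mul_one, measureReal_def,
    Measure.volume_eq_prod, Measure.prod_prod, Real.volume_Ioc, Real.volume_Ioo]
  rw [← ENNReal.ofReal_mul (by norm_num)]
  rw [ENNReal.toReal_ofReal (by nlinarith [Real.pi_pos])]
  ring

lemma auxH_integrable : Integrable auxH volume := by
  rw [← aux_polar_integrableOn_iff]
  exact (integrableOn_congr_fun aux_target_eq
    polarCoord.open_target.measurableSet).2 aux_indicator_integrableOn

lemma auxH_integral : ∫ w, auxH w = 20 * π := by
  rw [← integral_comp_polarCoord_symm]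
  rw [← aux_indicator_integral]
  apply setIntegral_congr_fun polarCoord.open_target.measurableSet
  intro p hp
  simp only [smul_eq_mul]
  exact aux_target_eq p hp

noncomputable def auxF (R : ℝ) : ℝ × ℝ → ℝ := fun y =>
  ({y : ℝ × ℝ | y.1 ^ 2 + y.2 ^ 2 ≤ 25}).indicator
    (fun y => (Real.sqrt ((y.1 - R) ^ 2 + y.2 ^ 2))⁻¹) y

lemma auxF_meas (R : ℝ) : Measurable (auxF R) := by
  apply Measurable.indicator
  · exact (((continuous_fst.sub continuous_const).pow 2).add
      (continuous_snd.pow 2)).sqrt.measurable.inv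
  · exact measurableSet_le (by fun_prop) measurable_const

lemma auxF_nonneg (R : ℝ) (y : ℝ × ℝ) : 0 ≤ auxF R y := by
  apply Set.indicator_nonneg; intro y _; positivity

lemma auxF_le (R : ℝ) (hR0 : 0 ≤ R) (hR5 : R ≤ 5) (y : ℝ × ℝ) :
    auxF R y ≤ auxH (y - (R, 0)) := by
  have h2 : (y - (R, 0)).1 = y.1 - R := rfl
  have h3 : (y - (R, 0)).2 = y.2 - 0 := rfl
  unfold auxF auxH
  by_cases hy : y ∈ {y : ℝ × ℝ | y.1 ^ 2 + y.2 ^ 2 ≤ 25}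
  · rw [Set.indicator_of_mem hy, Set.indicator_of_mem]
    · rw [h2, h3, sub_zero]
    · simp only [mem_setOf_eq, h2, h3, sub_zero]
      have := hy; simp only [mem_setOf_eq] at this
      have hy1 : -5 ≤ y.1 := by nlinarith [sq_nonneg (y.1 + 5), sq_nonneg y.2]
      nlinarith [mul_nonneg hR0 (by linarith : (0:ℝ) ≤ y.1 + 5)]
  · rw [Set.indicator_of_notMem hy]
    exact auxH_nonneg _

lemma auxF_integrable (R : ℝ) (hR0 : 0 ≤ R) (hR5 : R ≤ 5) :
    Integrable (auxF R) volume := by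
  have hg : Integrable (fun y : ℝ × ℝ => auxH (y - (R, 0))) volume :=
    auxH_integrable.comp_sub_right (R, 0)
  apply hg.mono' (auxF_meas R).aestronglyMeasurable
  filter_upwards with y
  rw [Real.norm_eq_abs, abs_of_nonneg (auxF_nonneg R y)]
  exact auxF_le R hR0 hR5 y

lemma auxF_integral_le (R : ℝ) (hR0 : 0 ≤ R) (hR5 : R ≤ 5) :
    ∫ y, auxF R y ≤ 20 * π := by
  have hg : Integrable (fun y : ℝ × ℝ => auxH (y - (R, 0))) volume :=
    auxH_integrable.comp_sub_right (R, 0)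
  calc ∫ y, auxF R y ≤ ∫ y, auxH (y - (R, 0)) :=
        integral_mono (auxF_integrable R hR0 hR5) hg (auxF_le R hR0 hR5)
    _ = ∫ y, auxH y := integral_sub_right_eq_self auxH (R, 0)
    _ = 20 * π := auxH_integral

noncomputable def auxFF (R : ℝ) : ℝ × ℝ → ℝ := fun p =>
  (Icc (0:ℝ) 5).indicator (fun _ => (1:ℝ)) p.1 *
    (p.1 / Real.sqrt ((p.1 * Real.cos p.2 - R) ^ 2 + p.1 ^ 2 * Real.sin p.2 ^ 2))

lemma auxFF_eq (R : ℝ) : ∀ p ∈ polarCoord.target,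
    p.1 * auxF R (polarCoord.symm p) = auxFF R p := by
  rintro ⟨r, θ⟩ hp
  rw [polarCoord_target] at hp
  obtain ⟨hr, hθ⟩ := hp
  simp only [mem_Ioi] at hr
  have hsq : (r * Real.cos θ) ^ 2 + (r * Real.sin θ) ^ 2 = r ^ 2 := by
    have := Real.sin_sq_add_cos_sq θ; nlinarith
  have hker : (r * Real.cos θ - R) ^ 2 + (r * Real.sin θ) ^ 2
      = (r * Real.cos θ - R) ^ 2 + r ^ 2 * Real.sin θ ^ 2 := by
    rw [mul_pow]
  unfold auxF auxFF
  simp only [polarCoord_symm_apply]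
  by_cases h5 : r ≤ 5
  · rw [Set.indicator_of_mem, Set.indicator_of_mem (by exact ⟨hr.le, h5⟩)]
    · simp only [hker, one_mul, div_eq_mul_inv]
    · simp only [mem_setOf_eq, hsq]; nlinarith
  · rw [Set.indicator_of_notMem, Set.indicator_of_notMem, mul_zero, zero_mul]
    · rintro ⟨_, h⟩; exact h5 h
    · simp only [mem_setOf_eq, hsq]; intro h; apply h5; nlinarith

lemma auxFF_integrableOn (R : ℝ) (hR0 : 0 ≤ R) (hR5 : R ≤ 5) :
    IntegrableOn (auxFF R) polarCoord.target volume := by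
  refine (integrableOn_congr_fun (auxFF_eq R) polarCoord.open_target.measurableSet).1 ?_
  exact (aux_polar_integrableOn_iff (auxF R)).2 (auxF_integrable R hR0 hR5)

lemma auxFF_integral_le (R : ℝ) (hR0 : 0 ≤ R) (hR5 : R ≤ 5) :
    ∫ p in polarCoord.target, auxFF R p ≤ 20 * π := by
  have h1 : ∫ p in polarCoord.target, auxFF R p
      = ∫ p in polarCoord.target, p.1 • auxF R (polarCoord.symm p) := by
    apply setIntegral_congr_fun polarCoord.open_target.measurableSet
    intro p hp
    simp only [smul_eq_mul]
    exact (auxFF_eq R p hp).symm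
  rw [h1, integral_comp_polarCoord_symm]
  exact auxF_integral_le R hR0 hR5

lemma auxFF_prod_integrable (R : ℝ) (hR0 : 0 ≤ R) (hR5 : R ≤ 5) :
    Integrable (auxFF R) ((volume.restrict (Ioi (0:ℝ))).prod (volume.restrict (Ioo (-π) π))) := by
  rw [Measure.prod_restrict]
  have := auxFF_integrableOn R hR0 hR5
  rwa [IntegrableOn, polarCoord_target, Measure.volume_eq_prod] at this

lemma auxPsi_integrable (R : ℝ) (hR0 : 0 ≤ R) (hR5 : R ≤ 5) :
    Integrable (fun r => ∫ θ in Ioo (-π) π, auxFF R (r, θ)) (volume.restrict (Ioi (0:ℝ))) :=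
  (auxFF_prod_integrable R hR0 hR5).integral_prod_left

lemma auxPsi_integral_le (R : ℝ) (hR0 : 0 ≤ R) (hR5 : R ≤ 5) :
    ∫ r in Ioi (0:ℝ), ∫ θ in Ioo (-π) π, auxFF R (r, θ) ≤ 20 * π := by
  have h := setIntegral_prod (μ := volume) (ν := volume) (auxFF R)
    (s := Ioi (0:ℝ)) (t := Ioo (-π) π) ?_
  · rw [← Measure.volume_eq_prod] at h
    rw [← h]
    rw [← polarCoord_target]
    exact auxFF_integral_le R hR0 hR5
  · have := auxFF_integrableOn R hR0 hR5
    rwa [IntegrableOn, polarCoord_target, Measure.volume_eq_prod] at this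

lemma auxFF_periodic_integral (R r : ℝ) :
    ∫ θ in Ioo (0:ℝ) (2*π), auxFF R (r, θ) = ∫ θ in Ioo (-π) π, auxFF R (r, θ) := by
  have hper : Function.Periodic (fun θ => auxFF R (r, θ)) (2*π) := by
    intro θ
    unfold auxFF
    simp only [Real.cos_add_two_pi, Real.sin_add_two_pi]
  have h1 : ∫ θ in Ioo (0:ℝ) (2*π), auxFF R (r, θ)
      = ∫ θ in (0:ℝ)..(0+2*π), auxFF R (r, θ) := by
    rw [zero_add, intervalIntegral.integral_of_le (by positivity), integral_Ioc_eq_integral_Ioo]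
  have h2 : ∫ θ in Ioo (-π) π, auxFF R (r, θ)
      = ∫ θ in (-π)..(-π+2*π), auxFF R (r, θ) := by
    rw [show -π+2*π = π by ring, intervalIntegral.integral_of_le (by linarith [Real.pi_pos]),
      integral_Ioc_eq_integral_Ioo]
  rw [h1, h2, hper.intervalIntegral_add_eq 0 (-π)]

/-- The z-level estimate for a generic bounded compactly supported density factor. -/
lemma aux_z_step {R r θ c : ℝ} {u : ℝ → ℝ} (hr : 0 < r) (hc : 0 ≤ c)
    (hq : 0 < (r * Real.cos θ - R) ^ 2 + r ^ 2 * Real.sin θ ^ 2)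
    (hum : Measurable u) (hub : ∀ z, |u z| ≤ c)
    (hu0 : ∀ z, z ∉ Icc (-(0.2:ℝ)) 0.2 → u z = 0) :
    Integrable (fun z => u z *
        ((R - r * Real.cos θ) /
          (Real.sqrt ((r * Real.cos θ - R) ^ 2 + r ^ 2 * Real.sin θ ^ 2 + z ^ 2)) ^ 3) * r)
      ∧ |∫ z, u z *
        ((R - r * Real.cos θ) /
          (Real.sqrt ((r * Real.cos θ - R) ^ 2 + r ^ 2 * Real.sin θ ^ 2 + z ^ 2)) ^ 3) * r|
        ≤ c * r * (π / Real.sqrt ((r * Real.cos θ - R) ^ 2 + r ^ 2 * Real.sin θ ^ 2)) := by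
  set q : ℝ := (r * Real.cos θ - R) ^ 2 + r ^ 2 * Real.sin θ ^ 2 with hqdef
  set W : ℝ → ℝ := (Icc (-(0.2:ℝ)) 0.2).indicator (fun z => c * (q + z ^ 2)⁻¹ * r) with hW
  have hWint : Integrable W := by
    rw [hW, integrable_indicator_iff measurableSet_Icc]
    apply ContinuousOn.integrableOn_compact isCompact_Icc
    apply Continuous.continuousOn
    have : Continuous fun z : ℝ => (q + z ^ 2)⁻¹ := by
      apply Continuous.inv₀ (by continuity)
      intro z; positivity
    continuity
  have hbound : ∀ z, ‖u z *
      ((R - r * Real.cos θ) /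
        (Real.sqrt ((r * Real.cos θ - R) ^ 2 + r ^ 2 * Real.sin θ ^ 2 + z ^ 2)) ^ 3) * r‖
      ≤ W z := by
    intro z
    rw [Real.norm_eq_abs]
    by_cases hz : z ∈ Icc (-(0.2:ℝ)) 0.2
    · rw [hW, Set.indicator_of_mem hz]
      rw [abs_mul, abs_mul, abs_of_pos hr]
      have h1 := hub z
      have h2 := aux_kernel_bound R r θ z
      apply mul_le_mul_of_nonneg_right _ hr.le
      apply mul_le_mul h1 h2 (abs_nonneg _) hc
    · rw [hu0 z hz, zero_mul, zero_mul, abs_zero, hW, Set.indicator_of_notMem hz]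
  have hmeasA : AEStronglyMeasurable (fun z => u z *
      ((R - r * Real.cos θ) /
        (Real.sqrt ((r * Real.cos θ - R) ^ 2 + r ^ 2 * Real.sin θ ^ 2 + z ^ 2)) ^ 3) * r)
      volume := by
    apply Measurable.aestronglyMeasurable
    apply Measurable.mul _ measurable_const
    apply hum.mul
    apply Measurable.div measurable_const
    apply Measurable.pow _ measurable_const
    apply Real.continuous_sqrt.measurable.comp
    fun_prop
  constructor
  · exact hWint.mono' hmeasA (Filter.Eventually.of_forall hbound)
  · calc |∫ z, u z *
        ((R - r * Real.cos θ) /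
          (Real.sqrt ((r * Real.cos θ - R) ^ 2 + r ^ 2 * Real.sin θ ^ 2 + z ^ 2)) ^ 3) * r|
        ≤ ∫ z, W z := by
          rw [← Real.norm_eq_abs]
          exact norm_integral_le_of_norm_le hWint (Filter.Eventually.of_forall hbound)
      _ = ∫ z in Icc (-(0.2:ℝ)) 0.2, c * (q + z ^ 2)⁻¹ * r := by
          rw [hW, integral_indicator measurableSet_Icc]
      _ = (c * r) * ∫ z in Icc (-(0.2:ℝ)) 0.2, (q + z ^ 2)⁻¹ := by
          rw [← MeasureTheory.integral_const_mul]
          congr 1; funext z; ring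
      _ ≤ (c * r) * (π / Real.sqrt q) := by
          apply mul_le_mul_of_nonneg_left (aux_z_integral hq) (by positivity)
      _ = c * r * (π / Real.sqrt q) := by ring

noncomputable def intA (ρ₀ : ℝ × ℝ → ℝ) (v : ℝ → ℝ) (R : ℝ) (r θ z : ℝ) : ℝ :=
  ρ₀ (r, z) / Real.sqrt (1 - v r ^ 2) *
    ((R - r * Real.cos θ) /
      (Real.sqrt ((r * Real.cos θ - R) ^ 2 + r ^ 2 * Real.sin θ ^ 2 + z ^ 2)) ^ 3) * r

lemma intA_meas {ρ₀ : ℝ × ℝ → ℝ} {v : ℝ → ℝ} (hmρ : Measurable ρ₀) (hv : Measurable v)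
    (R : ℝ) : Measurable fun p : (ℝ × ℝ) × ℝ => intA ρ₀ v R p.1.1 p.1.2 p.2 := by
  unfold intA
  apply Measurable.mul
  apply Measurable.mul
  · apply Measurable.div
    · exact hmρ.comp ((measurable_fst.fst).prodMk measurable_snd)
    · apply Real.continuous_sqrt.measurable.comp
      apply Measurable.sub measurable_const
      exact (hv.comp measurable_fst.fst).pow_const 2
  · apply Measurable.div
    · fun_prop
    · apply Measurable.pow_const
      apply Real.continuous_sqrt.measurable.comp
      fun_prop
  · exact measurable_fst.fst

lemma FA_sm {ρ₀ : ℝ × ℝ → ℝ} {v : ℝ → ℝ} (hmρ : Measurable ρ₀) (hv : Measurable v)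
    (R : ℝ) : StronglyMeasurable fun p : ℝ × ℝ => ∫ z, intA ρ₀ v R p.1 p.2 z :=
  (intA_meas hmρ hv R).stronglyMeasurable.integral_prod_right'

lemma HA_sm {ρ₀ : ℝ × ℝ → ℝ} {v : ℝ → ℝ} (hmρ : Measurable ρ₀) (hv : Measurable v)
    (R : ℝ) :
    StronglyMeasurable fun r : ℝ => ∫ θ in Ioo (0:ℝ) (2*π), ∫ z, intA ρ₀ v R r θ z :=
  StronglyMeasurable.integral_prod_right' (ν := volume.restrict (Ioo (0:ℝ) (2*π)))
    (FA_sm hmρ hv R)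

lemma aux_theta_step {δ M s R r : ℝ} {ρ₀ : ℝ × ℝ → ℝ} {v v' : ℝ → ℝ}
    (hδ0 : 0 < δ) (hM : 0 ≤ M)
    (hmρ : Measurable ρ₀) (hρ0 : ∀ p, 0 ≤ ρ₀ p) (hρM : ∀ p, ρ₀ p ≤ M)
    (hsupp : Function.support ρ₀ ⊆ Icc (0:ℝ) 5 ×ˢ Icc (-0.2:ℝ) 0.2)
    (hv : Measurable v) (hv' : Measurable v')
    (hv2 : ∀ x, v x ^ 2 ≤ 1 - δ) (hv'2 : ∀ x, v' x ^ 2 ≤ 1 - δ)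
    (hs : ∀ x, |v x ^ 2 - v' x ^ 2| ≤ s) (hs0 : 0 ≤ s)
    (hR0 : 0 ≤ R) (hr : 0 < r) (hrR : r ≠ R) :
    IntegrableOn (fun θ => ∫ z, intA ρ₀ v R r θ z) (Ioo (0:ℝ) (2*π)) volume
    ∧ |∫ θ in Ioo (0:ℝ) (2*π), ∫ z, intA ρ₀ v R r θ z|
        ≤ (M / Real.sqrt δ) * π *
          ∫ θ in Ioo (0:ℝ) (2*π),
            r / Real.sqrt ((r * Real.cos θ - R) ^ 2 + r ^ 2 * Real.sin θ ^ 2)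
    ∧ |(∫ θ in Ioo (0:ℝ) (2*π), ∫ z, intA ρ₀ v R r θ z)
        - ∫ θ in Ioo (0:ℝ) (2*π), ∫ z, intA ρ₀ v' R r θ z|
        ≤ (M * s / (2 * δ * Real.sqrt δ)) * π *
          ∫ θ in Ioo (0:ℝ) (2*π),
            r / Real.sqrt ((r * Real.cos θ - R) ^ 2 + r ^ 2 * Real.sin θ ^ 2) := by
  have hsd : 0 < Real.sqrt δ := Real.sqrt_pos.2 hδ0
  have hq : ∀ θ, 0 < (r * Real.cos θ - R) ^ 2 + r ^ 2 * Real.sin θ ^ 2 := fun θ =>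
    lt_of_lt_of_le (pow_pos (abs_pos.2 (sub_ne_zero.2 hrR)) 2)
      (le_trans (le_of_eq (sq_abs (r - R))) (aux_q_lower hR0 hr.le θ))
  -- facts about the density factor
  have hufacts : ∀ w : ℝ → ℝ, Measurable w → (∀ x, w x ^ 2 ≤ 1 - δ) →
      Measurable (fun z => ρ₀ (r, z) / Real.sqrt (1 - w r ^ 2))
      ∧ (∀ z, |ρ₀ (r, z) / Real.sqrt (1 - w r ^ 2)| ≤ M / Real.sqrt δ)
      ∧ (∀ z, z ∉ Icc (-(0.2:ℝ)) 0.2 → ρ₀ (r, z) / Real.sqrt (1 - w r ^ 2) = 0) := by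
    intro w hw hw2
    have hx : δ ≤ 1 - w r ^ 2 := by linarith [hw2 r]
    refine ⟨?_, ?_, ?_⟩
    · exact (hmρ.comp (measurable_const.prodMk measurable_id)).div measurable_const
    · intro z
      rw [abs_of_nonneg (div_nonneg (hρ0 _) (Real.sqrt_nonneg _))]
      exact div_le_div₀ hM (hρM _) hsd (Real.sqrt_le_sqrt hx)
    · intro z hz
      have h0 : ρ₀ (r, z) = 0 := by
        by_contra h
        exact hz (hsupp (Function.mem_support.2 h)).2
      rw [h0, zero_div]
  have hρ0z : ∀ z, z ∉ Icc (-(0.2:ℝ)) 0.2 → ρ₀ (r, z) = 0 := by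
    intro z hz
    by_contra h
    exact hz (hsupp (Function.mem_support.2 h)).2
  -- z-level facts
  have key : ∀ w : ℝ → ℝ, Measurable w → (∀ x, w x ^ 2 ≤ 1 - δ) → ∀ θ,
      Integrable (fun z => intA ρ₀ w R r θ z)
      ∧ |∫ z, intA ρ₀ w R r θ z|
          ≤ (M / Real.sqrt δ) * r *
            (π / Real.sqrt ((r * Real.cos θ - R) ^ 2 + r ^ 2 * Real.sin θ ^ 2)) := by
    intro w hw hw2 θ
    obtain ⟨hm1, hb1, h01⟩ := hufacts w hw hw2
    exact aux_z_step hr (by positivity) (hq θ) hm1 hb1 h01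
  -- z-level difference fact
  have hx : δ ≤ 1 - v r ^ 2 := by linarith [hv2 r]
  have hy : δ ≤ 1 - v' r ^ 2 := by linarith [hv'2 r]
  have keyd : ∀ θ,
      |(∫ z, intA ρ₀ v R r θ z) - ∫ z, intA ρ₀ v' R r θ z|
        ≤ (M * s / (2 * δ * Real.sqrt δ)) * r *
          (π / Real.sqrt ((r * Real.cos θ - R) ^ 2 + r ^ 2 * Real.sin θ ^ 2)) := by
    intro θ
    have hud : ∀ z, |ρ₀ (r, z) / Real.sqrt (1 - v r ^ 2)
        - ρ₀ (r, z) / Real.sqrt (1 - v' r ^ 2)| ≤ M * s / (2 * δ * Real.sqrt δ) := by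
      intro z
      have heq : ρ₀ (r, z) / Real.sqrt (1 - v r ^ 2) - ρ₀ (r, z) / Real.sqrt (1 - v' r ^ 2)
          = ρ₀ (r, z) * ((Real.sqrt (1 - v r ^ 2))⁻¹ - (Real.sqrt (1 - v' r ^ 2))⁻¹) := by
        rw [div_eq_mul_inv, div_eq_mul_inv, mul_sub]
      rw [heq, abs_mul, abs_of_nonneg (hρ0 _)]
      have hlip := aux_sqrt_lip hδ0 hx hy
      have hxy : |(1 - v r ^ 2) - (1 - v' r ^ 2)| ≤ s := by
        have : (1 - v r ^ 2) - (1 - v' r ^ 2) = -(v r ^ 2 - v' r ^ 2) := by ring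
        rw [this, abs_neg]
        exact hs r
      have h2 : |(Real.sqrt (1 - v r ^ 2))⁻¹ - (Real.sqrt (1 - v' r ^ 2))⁻¹|
          ≤ s / (2 * δ * Real.sqrt δ) :=
        hlip.trans ((div_le_div_iff_of_pos_right (by positivity)).2 hxy)
      calc ρ₀ (r, z) * |(Real.sqrt (1 - v r ^ 2))⁻¹ - (Real.sqrt (1 - v' r ^ 2))⁻¹|
          ≤ M * (s / (2 * δ * Real.sqrt δ)) :=
            mul_le_mul (hρM _) h2 (abs_nonneg _) hM
        _ = M * s / (2 * δ * Real.sqrt δ) := by rw [mul_div_assoc]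
    have hzstep := aux_z_step (u := fun z => ρ₀ (r, z) / Real.sqrt (1 - v r ^ 2)
        - ρ₀ (r, z) / Real.sqrt (1 - v' r ^ 2)) hr
      (by positivity : (0:ℝ) ≤ M * s / (2 * δ * Real.sqrt δ)) (hq θ)
      (((hmρ.comp (measurable_const.prodMk measurable_id)).div measurable_const).sub
        ((hmρ.comp (measurable_const.prodMk measurable_id)).div measurable_const))
      hud
      (fun z hz => by simp only [hρ0z z hz, zero_div, sub_zero])
    have hdiffz : (∫ z, intA ρ₀ v R r θ z) - ∫ z, intA ρ₀ v' R r θ z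
        = ∫ z, ((ρ₀ (r, z) / Real.sqrt (1 - v r ^ 2)
            - ρ₀ (r, z) / Real.sqrt (1 - v' r ^ 2)) *
          ((R - r * Real.cos θ) /
            (Real.sqrt ((r * Real.cos θ - R) ^ 2 + r ^ 2 * Real.sin θ ^ 2 + z ^ 2)) ^ 3) * r) := by
      rw [← integral_sub (key v hv hv2 θ).1 (key v' hv' hv'2 θ).1]
      congr 1
      funext z
      unfold intA
      ring
    rw [hdiffz]
    exact hzstep.2
  -- θ-level integrability of the dominating function
  have hGint : ∀ c : ℝ, IntegrableOn (fun θ => c * r *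
      (π / Real.sqrt ((r * Real.cos θ - R) ^ 2 + r ^ 2 * Real.sin θ ^ 2)))
      (Ioo (0:ℝ) (2*π)) volume := by
    intro c
    apply IntegrableOn.mono_set _ Ioo_subset_Icc_self
    apply Continuous.integrableOn_Icc
    apply Continuous.mul continuous_const
    apply Continuous.div continuous_const
    · apply Real.continuous_sqrt.comp
      apply Continuous.add
      · exact ((continuous_const.mul Real.continuous_cos).sub continuous_const).pow 2
      · exact continuous_const.mul (Real.continuous_sin.pow 2)
    · intro θ
      exact (Real.sqrt_pos.2 (hq θ)).ne'
  have hGeq : ∀ c : ℝ, ∫ θ in Ioo (0:ℝ) (2*π), c * r *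
      (π / Real.sqrt ((r * Real.cos θ - R) ^ 2 + r ^ 2 * Real.sin θ ^ 2))
      = c * π * ∫ θ in Ioo (0:ℝ) (2*π),
          r / Real.sqrt ((r * Real.cos θ - R) ^ 2 + r ^ 2 * Real.sin θ ^ 2) := by
    intro c
    rw [← MeasureTheory.integral_const_mul]
    congr 1
    funext θ
    ring
  -- measurability of the inner integral in θ
  have hFAmeas : ∀ w : ℝ → ℝ, Measurable w →
      AEStronglyMeasurable (fun θ => ∫ z, intA ρ₀ w R r θ z)
        (volume.restrict (Ioo (0:ℝ) (2*π))) := by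
    intro w hw
    exact ((FA_sm hmρ hw R).comp_measurable
      (measurable_const.prodMk measurable_id)).aestronglyMeasurable
  have hFAint : ∀ w : ℝ → ℝ, (hw : Measurable w) → (∀ x, w x ^ 2 ≤ 1 - δ) →
      IntegrableOn (fun θ => ∫ z, intA ρ₀ w R r θ z) (Ioo (0:ℝ) (2*π)) volume := by
    intro w hw hw2
    apply (hGint (M / Real.sqrt δ)).mono' (hFAmeas w hw)
    filter_upwards with θ
    rw [Real.norm_eq_abs]
    exact (key w hw hw2 θ).2
  refine ⟨hFAint v hv hv2, ?_, ?_⟩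
  · rw [← hGeq]
    rw [← Real.norm_eq_abs]
    apply norm_integral_le_of_norm_le (hGint _)
    filter_upwards with θ
    rw [Real.norm_eq_abs]
    exact (key v hv hv2 θ).2
  · rw [← hGeq]
    rw [← integral_sub (hFAint v hv hv2) (hFAint v' hv' hv'2), ← Real.norm_eq_abs]
    apply norm_integral_le_of_norm_le (hGint _)
    filter_upwards with θ
    rw [Real.norm_eq_abs]
    exact keyd θ




/-- A Lipschitz estimate, uniform in `R ∈ [0,5]`, for the
relativistic rotation-curve integral as a function of the squared velocity:
there is a constant `L` (depending only on `δ` and the bound `M` on `ρ₀`) such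
that the difference of the integrals for two velocity profiles `v`, `v'` with
`v², v'² ≤ 1 - δ` is bounded by `L · sup_r |v(r)² - v'(r)²|`. -/
theorem relativistic_integral_lipschitz_in_squared_velocity
    (δ M : ℝ) (hδ : δ ∈ Ioo (0 : ℝ) 1) (hM : 0 ≤ M) :
    ∃ L : ℝ,
      ∀ ρ₀ : ℝ × ℝ → ℝ, Measurable ρ₀ →
        (∀ p : ℝ × ℝ, 0 ≤ ρ₀ p) → (∀ p : ℝ × ℝ, ρ₀ p ≤ M) →
        Function.support ρ₀ ⊆ Icc (0 : ℝ) 5 ×ˢ Icc (-0.2 : ℝ) 0.2 →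
        ∀ v v' : ℝ → ℝ, Measurable v → Measurable v' →
          (∀ r : ℝ, v r ^ 2 ≤ 1 - δ) → (∀ r : ℝ, v' r ^ 2 ≤ 1 - δ) →
          ∀ R ∈ Icc (0 : ℝ) 5,
            |(∫ r in Ioi (0 : ℝ), ∫ θ in Ioo (0 : ℝ) (2 * Real.pi), ∫ z : ℝ,
                ρ₀ (r, z) / Real.sqrt (1 - v r ^ 2) *
                    ((R - r * Real.cos θ) /
                      (Real.sqrt ((r * Real.cos θ - R) ^ 2
                          + r ^ 2 * Real.sin θ ^ 2 + z ^ 2)) ^ 3)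
                  * r)
              - (∫ r in Ioi (0 : ℝ), ∫ θ in Ioo (0 : ℝ) (2 * Real.pi), ∫ z : ℝ,
                ρ₀ (r, z) / Real.sqrt (1 - v' r ^ 2) *
                    ((R - r * Real.cos θ) /
                      (Real.sqrt ((r * Real.cos θ - R) ^ 2
                          + r ^ 2 * Real.sin θ ^ 2 + z ^ 2)) ^ 3)
                  * r)|
              ≤ L * ⨆ r : ℝ, |v r ^ 2 - v' r ^ 2| := by

  obtain ⟨hδ0, hδ1⟩ := hδ
  refine ⟨20 * π ^ 2 * M / (2 * δ * Real.sqrt δ), ?_⟩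
  intro ρ₀ hmρ hρ0 hρM hsupp v v' hv hv' hv2 hv'2 R hR
  obtain ⟨hR0, hR5⟩ := hR
  set s : ℝ := ⨆ r : ℝ, |v r ^ 2 - v' r ^ 2| with hsdef
  have hbdd : BddAbove (Set.range fun r : ℝ => |v r ^ 2 - v' r ^ 2|) := by
    refine ⟨2, ?_⟩
    rintro x ⟨r, rfl⟩
    have h1 := hv2 r; have h2 := hv'2 r
    have h3 := sq_nonneg (v r); have h4 := sq_nonneg (v' r)
    rw [abs_le]; constructor <;> nlinarith
  have hsle : ∀ r : ℝ, |v r ^ 2 - v' r ^ 2| ≤ s := fun r => le_ciSup hbdd r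
  have hs0 : 0 ≤ s := (abs_nonneg _).trans (hsle 0)
  have hsd : 0 < Real.sqrt δ := Real.sqrt_pos.2 hδ0
  -- abbreviations
  set P : ℝ → ℝ := fun r => ∫ θ in Ioo (-π) π, auxFF R (r, θ) with hPdef
  show |(∫ r in Ioi (0:ℝ), ∫ θ in Ioo (0:ℝ) (2*π), ∫ z, intA ρ₀ v R r θ z)
      - ∫ r in Ioi (0:ℝ), ∫ θ in Ioo (0:ℝ) (2*π), ∫ z, intA ρ₀ v' R r θ z|
      ≤ 20 * π ^ 2 * M / (2 * δ * Real.sqrt δ) * s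
  -- a.e. facts on (0, ∞)
  have haeR : ∀ᵐ r ∂(volume.restrict (Ioi (0:ℝ))), r ≠ R := by
    refine ae_restrict_of_ae ?_
    rw [ae_iff]
    have : {a : ℝ | ¬a ≠ R} = {R} := by ext x; simp
    rw [this]
    exact Real.volume_singleton
  have haeI : ∀ᵐ r ∂(volume.restrict (Ioi (0:ℝ))), r ∈ Ioi (0:ℝ) :=
    ae_restrict_mem measurableSet_Ioi
  -- vanishing beyond r = 5
  have hzero : ∀ w : ℝ → ℝ, ∀ r : ℝ, 5 < r →
      (∫ θ in Ioo (0:ℝ) (2*π), ∫ z, intA ρ₀ w R r θ z) = 0 := by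
    intro w r h5
    have hz : ∀ θ z, intA ρ₀ w R r θ z = 0 := by
      intro θ z
      have h0 : ρ₀ (r, z) = 0 := by
        by_contra h
        exact (not_le.2 h5) (hsupp (Function.mem_support.2 h)).1.2
      unfold intA
      rw [h0, zero_div, zero_mul, zero_mul]
    simp only [hz, integral_zero]
  have hPzero : ∀ r : ℝ, 5 < r → P r = 0 := by
    intro r h5
    have hz : ∀ θ, auxFF R (r, θ) = 0 := by
      intro θ
      unfold auxFF
      rw [Set.indicator_of_notMem (fun h => (not_le.2 h5) h.2), zero_mul]
    simp only [hPdef, hz, integral_zero]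
  -- identification of the dominating integral for 0 < r ≤ 5
  have hPeq : ∀ r : ℝ, 0 < r → r ≤ 5 →
      (∫ θ in Ioo (0:ℝ) (2*π),
        r / Real.sqrt ((r * Real.cos θ - R) ^ 2 + r ^ 2 * Real.sin θ ^ 2)) = P r := by
    intro r hr h5
    have h1 : (fun θ => r / Real.sqrt ((r * Real.cos θ - R) ^ 2 + r ^ 2 * Real.sin θ ^ 2))
        = fun θ => auxFF R (r, θ) := by
      funext θ
      unfold auxFF
      rw [Set.indicator_of_mem (mem_Icc.mpr ⟨hr.le, h5⟩), one_mul]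
    rw [h1, auxFF_periodic_integral R r, hPdef]
  -- bounds for the outer integrands
  have hbd : ∀ w : ℝ → ℝ, Measurable w → (∀ x, w x ^ 2 ≤ 1 - δ) →
      ∀ᵐ r ∂(volume.restrict (Ioi (0:ℝ))),
        ‖∫ θ in Ioo (0:ℝ) (2*π), ∫ z, intA ρ₀ w R r θ z‖
          ≤ (M / Real.sqrt δ) * π * P r := by
    intro w hw hw2
    filter_upwards [haeR, haeI] with r hrR hr
    rw [Real.norm_eq_abs]
    by_cases h5 : r ≤ 5
    · have h := (aux_theta_step hδ0 hM hmρ hρ0 hρM hsupp hw hw hw2 hw2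
        (fun x => by simp [abs_nonneg]) le_rfl hR0 hr hrR).2.1
      rwa [hPeq r hr h5] at h
    · rw [hzero w r (not_le.1 h5), hPzero r (not_le.1 h5), abs_zero, mul_zero]
  have hint : ∀ w : ℝ → ℝ, Measurable w → (∀ x, w x ^ 2 ≤ 1 - δ) →
      Integrable (fun r => ∫ θ in Ioo (0:ℝ) (2*π), ∫ z, intA ρ₀ w R r θ z)
        (volume.restrict (Ioi (0:ℝ))) := by
    intro w hw hw2
    exact (((auxPsi_integrable R hR0 hR5).const_mul ((M / Real.sqrt δ) * π)).mono'
      (HA_sm hmρ hw R).aestronglyMeasurable (hbd w hw hw2))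
  have hdiffbd : ∀ᵐ r ∂(volume.restrict (Ioi (0:ℝ))),
      ‖(∫ θ in Ioo (0:ℝ) (2*π), ∫ z, intA ρ₀ v R r θ z)
        - ∫ θ in Ioo (0:ℝ) (2*π), ∫ z, intA ρ₀ v' R r θ z‖
        ≤ (M * s / (2 * δ * Real.sqrt δ)) * π * P r := by
    filter_upwards [haeR, haeI] with r hrR hr
    rw [Real.norm_eq_abs]
    by_cases h5 : r ≤ 5
    · have h := (aux_theta_step hδ0 hM hmρ hρ0 hρM hsupp hv hv' hv2 hv'2
        hsle hs0 hR0 hr hrR).2.2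
      rwa [hPeq r hr h5] at h
    · rw [hzero v r (not_le.1 h5), hzero v' r (not_le.1 h5), hPzero r (not_le.1 h5),
        sub_zero, abs_zero, mul_zero]
  -- final chain
  rw [← integral_sub (hint v hv hv2) (hint v' hv' hv'2), ← Real.norm_eq_abs]
  calc ‖∫ r in Ioi (0:ℝ), ((∫ θ in Ioo (0:ℝ) (2*π), ∫ z, intA ρ₀ v R r θ z)
        - ∫ θ in Ioo (0:ℝ) (2*π), ∫ z, intA ρ₀ v' R r θ z)‖
      ≤ ∫ r in Ioi (0:ℝ), (M * s / (2 * δ * Real.sqrt δ)) * π * P r :=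
        norm_integral_le_of_norm_le
          (((auxPsi_integrable R hR0 hR5).const_mul _)) hdiffbd
    _ = (M * s / (2 * δ * Real.sqrt δ)) * π * ∫ r in Ioi (0:ℝ), P r := by
        rw [← MeasureTheory.integral_const_mul]
    _ ≤ (M * s / (2 * δ * Real.sqrt δ)) * π * (20 * π) := by
        exact mul_le_mul_of_nonneg_left (auxPsi_integral_le R hR0 hR5)
          (mul_nonneg (div_nonneg (mul_nonneg hM hs0) (by positivity)) Real.pi_pos.le)
    _ = 20 * π ^ 2 * M / (2 * δ * Real.sqrt δ) * s := by ring
end
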